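/- arXiv:1711.10906 — 3 statements merged into one kernel-verified Lean document; each statement's English description precedes it below -/
import Mathlib

section
/- Every cubic graph having a 2-factor admits a (1,1,1,3,3)-packing edge-coloring. -/
open SimpleGraph

variable {V : Type*}

/-- A graph is cubic if every vertex has exactly 3 neighbors. -/
def IsCubicGraph (G : SimpleGraph V) : Prop := ∀ v, (G.neighborSet v).ncard = 3

/-- A 2-factor: a spanning subgraph in which every vertex has exactly 2 neighbors. -/
def IsTwoFactor {G : SimpleGraph V} (F : G.Subgraph) : Prop :=
  F.IsSpanning ∧ ∀ v, (F.neighborSet v).ncard = 2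

/-- An `S`-packing edge-coloring of `G`, where the sequence `S` is given as a list `L`
of natural numbers: a partition (given by a coloring function) of the edges into
`L.length` classes, where two distinct edges in class `i` are at distance at least
`L.get i + 1` in the line graph of `G`. -/
def HasPackingEdgeColoring (G : SimpleGraph V) (L : List ℕ) : Prop :=
  ∃ c : G.edgeSet → Fin L.length,
    ∀ e f : G.edgeSet, e ≠ f → c e = c f →
      (L.get (c e) : ℕ∞) + 1 ≤ G.lineGraph.edist e f

/-- The graph `G^k[A]`: vertices are the elements of `A` (a set of edges of `G`), two of them
being adjacent iff the corresponding edges are distinct and at distance at most `k` in `G`. -/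
noncomputable def distPowerGraph (G : SimpleGraph V) (k : ℕ) (A : Set (Sym2 V)) :
    SimpleGraph A where
  Adj e f := e ≠ f ∧ ∃ (he : (e : Sym2 V) ∈ G.edgeSet) (hf : (f : Sym2 V) ∈ G.edgeSet),
      G.lineGraph.edist ⟨e, he⟩ ⟨f, hf⟩ ≤ k
  symm := ⟨by
    rintro e f ⟨hne, he, hf, hd⟩
    exact ⟨hne.symm, hf, he, by rwa [SimpleGraph.edist_comm]⟩⟩
  loopless := ⟨by rintro e ⟨hne, -⟩; exact hne rfl⟩

/-- The set of odd cycles of a 2-factor `F`, viewed as the connected components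
of its spanning coercion with an odd number of vertices. -/
def oddCycles {G : SimpleGraph V} (F : G.Subgraph) :
    Set F.spanningCoe.ConnectedComponent :=
  {c | Odd c.supp.ncard}

/-- The set of edges of a 2-factor `F` lying on the cycle (connected component) `c`. -/
def cycleEdges {G : SimpleGraph V} (F : G.Subgraph)
    (c : F.spanningCoe.ConnectedComponent) : Set (Sym2 V) :=
  {e ∈ F.edgeSet | ∀ v ∈ e, v ∈ c.supp}

/-- A set `A` of edges of a 2-factor `F` is of type I if it contains exactly one edge
per odd cycle of `F` and no edge of any even cycle of `F`. -/
def IsTypeI {G : SimpleGraph V} (F : G.Subgraph) (A : Set (Sym2 V)) : Prop :=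
  A ⊆ F.edgeSet ∧ ∀ c : F.spanningCoe.ConnectedComponent,
    (Odd c.supp.ncard → (A ∩ cycleEdges F c).ncard = 1) ∧
    (¬ Odd c.supp.ncard → A ∩ cycleEdges F c = ∅)

/-- A set `B` of edges of a 2-factor `F` is of type II if no two of its edges are adjacent
in `G` and it contains exactly `⌊n/2⌋` edges of every cycle of `F` of length `n`. -/
def IsTypeII {G : SimpleGraph V} (F : G.Subgraph) (B : Set (Sym2 V)) : Prop :=
  B ⊆ F.edgeSet ∧
  (∀ e ∈ B, ∀ f ∈ B, e ≠ f → ∀ v : V, ¬(v ∈ e ∧ v ∈ f)) ∧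
  ∀ c : F.spanningCoe.ConnectedComponent,
    (B ∩ cycleEdges F c).ncard = c.supp.ncard / 2







lemma enat_two_le {x : ℕ∞} (h0 : x ≠ 0) (h1 : x ≠ 1) : 2 ≤ x := by
  cases x with
  | top => exact le_top
  | coe n =>
    have h0' : n ≠ 0 := by simpa using h0
    have h1' : n ≠ 1 := by simpa using h1
    exact_mod_cast (by omega : 2 ≤ n)

lemma edist_le_one_of_mem {G : SimpleGraph V} {e : Sym2 V} (he : e ∈ G.edgeSet)
    {u v : V} (hu : u ∈ e) (hv : v ∈ e) : G.edist u v ≤ 1 := by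
  by_cases huv : u = v
  · simp [huv]
  · have : e = s(u, v) := (Sym2.mem_and_mem_iff huv).mp ⟨hu, hv⟩
    have hadj : G.Adj u v := by rwa [this, SimpleGraph.mem_edgeSet] at he
    exact le_of_eq (SimpleGraph.edist_eq_one_iff_adj.mpr hadj)

lemma lineWalk_endpoint_bound {G : SimpleGraph V} {e f : G.edgeSet}
    (p : G.lineGraph.Walk e f) (hne : e ≠ f) :
    ∃ u w : V, u ∈ (e : Sym2 V) ∧ w ∈ (f : Sym2 V) ∧ G.edist u w + 1 ≤ p.length := by
  induction p with
  | nil => exact absurd rfl hne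
  | @cons e e' f h p ih =>
    obtain ⟨hne', x, hx1, hx2⟩ := SimpleGraph.lineGraph_adj_iff_exists.mp h
    by_cases hef : e' = f
    · subst hef
      refine ⟨x, x, hx1, hx2, ?_⟩
      simp only [SimpleGraph.edist_self, zero_add, SimpleGraph.Walk.length_cons]
      exact_mod_cast Nat.one_le_iff_ne_zero.mpr (Nat.succ_ne_zero _)
    · obtain ⟨u', w, hu', hw, hb⟩ := ih hef
      refine ⟨x, w, hx1, hw, ?_⟩
      have h1 : G.edist x u' ≤ 1 := edist_le_one_of_mem e'.2 hx2 hu'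
      have h2 : G.edist x w ≤ G.edist x u' + G.edist u' w := SimpleGraph.edist_triangle
      have h3 : G.edist x w + 1 ≤ 1 + (G.edist u' w + 1) := by
        calc G.edist x w + 1 ≤ (G.edist x u' + G.edist u' w) + 1 := by gcongr
          _ ≤ (1 + G.edist u' w) + 1 := by gcongr
          _ = 1 + (G.edist u' w + 1) := by ring
      calc G.edist x w + 1 ≤ 1 + (G.edist u' w + 1) := h3
        _ ≤ 1 + (p.length : ℕ∞) := by gcongr
        _ = ((SimpleGraph.Walk.cons h p).length : ℕ∞) := by
            simp [SimpleGraph.Walk.length_cons]; push_cast; ring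

lemma edist_le_two_cases {G : SimpleGraph V} {u w : V} (h : G.edist u w ≤ 2) :
    u = w ∨ G.Adj u w ∨ ∃ x, G.Adj u x ∧ G.Adj x w := by
  have hne : G.edist u w ≠ ⊤ := fun ht => by simp [ht] at h
  obtain ⟨q, hq⟩ := SimpleGraph.exists_walk_of_edist_ne_top hne
  have hlen : q.length ≤ 2 := by
    have := hq ▸ h
    exact_mod_cast this
  cases q with
  | nil => exact Or.inl rfl
  | cons ha q' =>
    cases q' with
    | nil => exact Or.inr (Or.inl ha)
    | cons hb q'' =>
      have : q''.length = 0 := by simp only [SimpleGraph.Walk.length_cons] at hlen; omega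
      have hvw := SimpleGraph.Walk.eq_of_length_eq_zero this
      subst hvw
      exact Or.inr (Or.inr ⟨_, ha, hb⟩)

lemma four_le_lineGraph_edist {G : SimpleGraph V} {e f : G.edgeSet} (hne : e ≠ f)
    (H : ∀ u w : V, u ∈ (e : Sym2 V) → w ∈ (f : Sym2 V) →
      u ≠ w ∧ ¬ G.Adj u w ∧ ∀ x, ¬(G.Adj u x ∧ G.Adj x w)) :
    (4 : ℕ∞) ≤ G.lineGraph.edist e f := by
  by_contra hlt
  push_neg at hlt
  have hne_top : G.lineGraph.edist e f ≠ ⊤ := fun ht => by simp [ht] at hlt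
  obtain ⟨p, hp⟩ := SimpleGraph.exists_walk_of_edist_ne_top hne_top
  have hplen : (p.length : ℕ∞) ≤ 3 := by
    rw [hp]
    exact Order.le_of_lt_add_one (by norm_num at hlt ⊢; exact hlt)
  obtain ⟨u, w, hu, hw, hb⟩ := lineWalk_endpoint_bound p hne
  have h2 : G.edist u w + 1 ≤ 3 := le_trans hb hplen
  have h2' : G.edist u w ≤ 2 := by
    cases hx : G.edist u w with
    | top => rw [hx] at h2; simp at h2
    | coe n =>
      rw [hx] at h2
      have hn : (n:ℕ) + 1 ≤ 3 := by exact_mod_cast h2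
      exact_mod_cast (by omega : n ≤ 2)
  obtain ⟨Hne, Hadj, Hmid⟩ := H u w hu hw
  rcases edist_le_two_cases h2' with h | h | ⟨x, hx1, hx2⟩
  · exact Hne h
  · exact Hadj h
  · exact Hmid x ⟨hx1, hx2⟩






section CycleEnum

variable {H : SimpleGraph V}

lemma exists_other [Fintype V] (hH : ∀ v, (H.neighborSet v).ncard = 2) {v p : V} (h : H.Adj v p) :
    ∃ q, (H.Adj v q ∧ q ≠ p) ∧ ∀ q', H.Adj v q' → q' ≠ p → q' = q := by
  have hd : (H.neighborSet v \ {p}).ncard = 1 := by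
    rw [Set.ncard_diff_singleton_of_mem ((H.mem_neighborSet v p).mpr h), hH v]
  obtain ⟨q, hq⟩ := Set.ncard_eq_one.mp hd
  have hqm : q ∈ H.neighborSet v \ {p} := hq ▸ rfl
  refine ⟨q, ⟨hqm.1, hqm.2⟩, fun q' h1 h2 => ?_⟩
  have : q' ∈ H.neighborSet v \ {p} := ⟨h1, h2⟩
  rw [hq] at this; exact this

lemma exists_nxt [Fintype V] (hH : ∀ v, (H.neighborSet v).ncard = 2) :
    ∃ nxt : V → V → V, ∀ ⦃v p⦄, H.Adj v p →
      H.Adj v (nxt v p) ∧ nxt v p ≠ p ∧ ∀ q, H.Adj v q → q ≠ p → q = nxt v p := by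
  classical
  choose f hf hf' using fun (v p : V) (h : H.Adj v p) => exists_other hH h
  refine ⟨fun v p => if h : H.Adj v p then f v p h else v, fun v p h => ?_⟩
  simp only [dif_pos h]
  exact ⟨(hf v p h).1, (hf v p h).2, fun q h1 h2 => hf' v p h q h1 h2⟩

lemma cycle_enum [Fintype V] (hH : ∀ v, (H.neighborSet v).ncard = 2)
    {u w : V} (huw : H.Adj u w) :
    ∃ (N : ℕ) (g : ℕ → V),
      3 ≤ N ∧ N = (H.connectedComponentMk u).supp.ncard ∧
      g 0 = u ∧ g (N-1) = w ∧
      (∀ k, g (k + N) = g k) ∧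
      (∀ i j, i < N → j < N → g i = g j → i = j) ∧
      (∀ k, H.Adj (g k) (g (k+1))) ∧
      (∀ v, v ∈ (H.connectedComponentMk u).supp ↔ ∃ i, i < N ∧ g i = v) ∧
      (∀ k, H.neighborSet (g k) = {g (k+1), g (k+N-1)}) := by
  classical
  obtain ⟨nxt, hnxt⟩ := exists_nxt hH
  have nxt_invol : ∀ {v p}, H.Adj v p → nxt v (nxt v p) = p := by
    intro v p h
    obtain ⟨h1, h2, _⟩ := hnxt h
    exact ((hnxt h1).2.2 p h (fun hh => h2 hh.symm)).symm
  -- the set of directed edges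
  let A := {x : V × V // H.Adj x.2 x.1}
  let S : A → A := fun a => ⟨(a.1.2, nxt a.1.2 a.1.1), ((hnxt a.2).1).symm⟩
  have Sval1 : ∀ a : A, (S a).1.1 = a.1.2 := fun a => rfl
  have Sval2 : ∀ a : A, (S a).1.2 = nxt a.1.2 a.1.1 := fun a => rfl
  have Sinj : Function.Injective S := by
    intro a b hS
    have h1 : a.1.2 = b.1.2 := by
      have := congrArg (fun x : A => x.1.1) hS
      simpa using this
    have h2 : nxt a.1.2 a.1.1 = nxt b.1.2 b.1.1 := by
      have := congrArg (fun x : A => x.1.2) hS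
      simpa using this
    have h3 : a.1.1 = b.1.1 := by
      have ha := nxt_invol a.2
      rw [h2, h1] at ha
      rw [nxt_invol b.2] at ha
      exact ha.symm
    exact Subtype.ext (Prod.ext h3 h1)
  let a0 : A := ⟨(w, u), huw⟩
  let f : ℕ → A := fun k => S^[k] a0
  have fS : ∀ k, f (k+1) = S (f k) := fun k => Function.iterate_succ_apply' S k a0
  have fadd : ∀ i j, f (i + j) = S^[i] (f j) := fun i j => Function.iterate_add_apply S i j a0
  -- periodicity
  have hper : ∃ n, 0 < n ∧ f n = f 0 := by
    obtain ⟨i, j, hne, heq⟩ := Finite.exists_ne_map_eq_of_infinite f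
    rcases Nat.lt_or_ge i j with h | h
    · refine ⟨j - i, by omega, ?_⟩
      apply Sinj.iterate i
      rw [← fadd i (j - i), ← fadd i 0, (by omega : i + (j - i) = j), Nat.add_zero]
      exact heq.symm
    · have h' : j < i := by omega
      refine ⟨i - j, by omega, ?_⟩
      apply Sinj.iterate j
      rw [← fadd j (i - j), ← fadd j 0, (by omega : j + (i - j) = i), Nat.add_zero]
      exact heq
  let N := Nat.find hper
  have hN : 0 < N ∧ f N = f 0 := Nat.find_spec hper
  have hNmin : ∀ n, 0 < n → n < N → f n ≠ f 0 := fun n h1 h2 => by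
    have := Nat.find_min hper h2
    tauto
  have hNpos : 0 < N := hN.1
  -- periodic
  have fperiod : ∀ k, f (k + N) = f k := by
    intro k
    rw [fadd k N, hN.2, ← fadd k 0, Nat.add_zero]
  have fmult : ∀ q k, f (k + q * N) = f k := by
    intro q
    induction q with
    | zero => simp
    | succ n ih => intro k; rw [(by ring : k + (n+1) * N = (k + n * N) + N), fperiod, ih]
  have fmod : ∀ k, f k = f (k % N) := by
    intro k
    have hdm : k % N + (k / N) * N = k := Nat.mod_add_div' k N
    calc f k = f (k % N + (k / N) * N) := by rw [hdm]
    _ = f (k % N) := fmult _ _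
  -- injectivity of f on [0, N)
  have finj : ∀ i j, i < N → j < N → f i = f j → i = j := by
    intro i j hi hj heq
    by_contra hne
    rcases Nat.lt_or_ge i j with h | h
    · refine hNmin (j - i) (by omega) (by omega) ?_
      apply Sinj.iterate i
      rw [← fadd i (j - i), ← fadd i 0, (by omega : i + (j - i) = j), Nat.add_zero]
      exact heq.symm
    · have h' : j < i := by omega
      refine hNmin (i - j) (by omega) (by omega) ?_
      apply Sinj.iterate j
      rw [← fadd j (i - j), ← fadd j 0, (by omega : j + (i - j) = i), Nat.add_zero]
      exact heq
  -- reversal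
  let R : A → A := fun a => ⟨(a.1.2, a.1.1), a.2.symm⟩
  have hSeq : ∀ a : A, (S a).1 = (a.1.2, nxt a.1.2 a.1.1) := fun a => rfl
  have hReq : ∀ a : A, (R a).1 = (a.1.2, a.1.1) := fun a => rfl
  have SRS : ∀ a, S (R (S a)) = R a := by
    intro a
    apply Subtype.ext
    show ((a.1 :  V × V).2, nxt a.1.2 (nxt a.1.2 a.1.1)) = (a.1.2, a.1.1)
    rw [nxt_invol a.2]
  have SRSk : ∀ k a, S^[k] (R (S^[k] a)) = R a := by
    intro k
    induction k with
    | zero => simp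
    | succ n ih =>
      intro a
      calc S^[n+1] (R (S^[n+1] a))
          = S^[n] (S (R (S (S^[n] a)))) := by
            rw [Function.iterate_succ_apply S n (R (S^[n+1] a)),
              Function.iterate_succ_apply' S n a]
      _ = S^[n] (R (S^[n] a)) := by rw [SRS]
      _ = R a := ih a
  have no_rev : ∀ a b, f b ≠ R (f a) := by
    intro a b hab
    set a' := a + (b + 1) * N with ha'
    have hbN : b + 1 ≤ (b + 1) * N := Nat.le_mul_of_pos_right _ hNpos
    have ha'b : b ≤ a' := by omega
    have hfa' : f a' = f a := fmult (b+1) a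
    have hab' : f b = R (f a') := by rw [hfa']; exact hab
    have ident : ∀ k, k ≤ a' → f (b + k) = R (f (a' - k)) := by
      intro k
      induction k with
      | zero => intro _; simpa using hab'
      | succ n ih =>
        intro hn
        have h1 : f (b + n) = R (f (a' - n)) := ih (by omega)
        have h2 : a' - n = (a' - (n+1)) + 1 := by omega
        rw [(by omega : b + (n+1) = (b + n) + 1), fS, h1, h2, fS, SRS]
    rcases Nat.even_or_odd (a' - b) with ⟨k, hk⟩ | ⟨k, hk⟩
    · -- f t = R (f t)
      have hkle : k ≤ a' := by omega
      have heqi : b + k = a' - k := by omega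
      have hthis := ident k hkle
      rw [heqi] at hthis
      have hval : (f (a' - k)).1 = ((f (a' - k)).1.2, (f (a' - k)).1.1) :=
        congrArg Subtype.val hthis
      have hcc : (f (a' - k)).1.1 = (f (a' - k)).1.2 := congrArg Prod.fst hval
      have hadj := (f (a' - k)).2
      rw [hcc] at hadj
      exact H.irrefl hadj
    · -- f (s+1) = R (f s)
      have hkle : k + 1 ≤ a' := by omega
      have heqi : b + (k + 1) = (a' - (k+1)) + 1 := by omega
      have hthis := ident (k+1) hkle
      rw [heqi, fS] at hthis
      set x := f (a' - (k+1)) with hx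
      have hval : (S x).1 = (x.1.2, x.1.1) := congrArg Subtype.val hthis
      have h2 : nxt x.1.2 x.1.1 = x.1.1 := by
        have := congrArg Prod.snd hval
        rw [Sval2] at this
        exact this
      exact (hnxt x.2).2.1 h2
  -- the vertex enumeration
  let g : ℕ → V := fun k => (f k).1.2
  have f0 : f 0 = a0 := Function.iterate_zero_apply S a0
  have gS : ∀ k, (f (k+1)).1.1 = g k := by
    intro k; rw [fS]
  have gval : ∀ k, g (k+1) = nxt (g k) ((f k).1.1) := by
    intro k
    show (f (k+1)).1.2 = _
    rw [fS]
  have gadj : ∀ k, H.Adj (g k) (g (k+1)) := by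
    intro k
    have h := (f (k+1)).2
    rw [gS k] at h
    exact h.symm
  have g0 : g 0 = u := rfl
  have glast : g (N - 1) = w := by
    have h1 : (f ((N-1)+1)).1.1 = g (N-1) := gS (N-1)
    rw [(by omega : (N-1)+1 = N), hN.2] at h1
    exact h1.symm
  have gperiod : ∀ k, g (k + N) = g k := fun k => by
    show (f (k+N)).1.2 = (f k).1.2
    rw [fperiod]
  have gmod : ∀ k, g k = g (k % N) := fun k => by
    show (f k).1.2 = (f (k % N)).1.2
    rw [← fmod]
  -- vertex injectivity
  have ginj : ∀ i j, i < N → j < N → g i = g j → i = j := by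
    intro i j hi hj heq
    by_cases hp : (f i).1.1 = (f j).1.1
    · have : f i = f j := Subtype.ext (Prod.ext hp heq)
      exact finj i j hi hj this
    · exfalso
      have hadji : H.Adj (g i) ((f i).1.1) := (f i).2
      have hadjj : H.Adj (g i) ((f j).1.1) := by rw [heq]; exact (f j).2
      have hji : (f j).1.1 = nxt (g i) ((f i).1.1) :=
        (hnxt hadji).2.2 _ hadjj (fun hh => hp hh.symm)
      have hfin : f (i+1) = R (f j) := by
        apply Subtype.ext
        have h1 : (f (i+1)).1 = (g i, nxt (g i) ((f i).1.1)) := by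
          rw [fS, hSeq]
        have h2 : (R (f j)).1 = ((f j).1.2, (f j).1.1) := rfl
        have h3 : (f j).1.2 = g j := rfl
        rw [h1, h2, h3, ← heq, hji]
      exact no_rev j (i+1) hfin
  -- N ≥ 3
  have hN3 : 3 ≤ N := by
    rcases (by omega : N = 1 ∨ N = 2 ∨ 3 ≤ N) with h1 | h2 | h3
    · exfalso
      have hf1 : f 1 = f 0 := by rw [← h1]; exact hN.2
      have hval : (f 1).1.1 = (f 0).1.1 := congrArg (fun a : A => a.1.1) hf1
      have e1 : (f 1).1.1 = u := by rw [fS 0, f0]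
      have e2 : (f 0).1.1 = w := rfl
      rw [e1, e2] at hval
      exact (H.ne_of_adj huw) hval
    · exfalso
      have hf2 : f 2 = f 0 := by rw [← h2]; exact hN.2
      have h1 : (f 2).1.1 = g 1 := gS 1
      rw [hf2] at h1
      have h2' : (f 0).1.1 = w := rfl
      rw [h2'] at h1
      have h3 : g 1 = nxt u w := by
        rw [gval 0, g0, f0]
      rw [h3] at h1
      exact (hnxt huw).2.1 h1.symm
    · exact h3
  -- neighbor sets
  have gadj' : ∀ k, H.Adj (g k) (g (k + N - 1)) := by
    intro k
    have h1 : H.Adj (g (k + N - 1)) (g ((k + N - 1) + 1)) := gadj _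
    rw [(by omega : (k + N - 1) + 1 = k + N), gperiod] at h1
    exact h1.symm
  have gne2 : ∀ k, g (k+1) ≠ g (k + N - 1) := by
    intro k heq
    have e1 : g (k+1) = g ((k+1) % N) := gmod _
    have e2 : g (k + N - 1) = g ((k + N - 1) % N) := gmod _
    rw [e1, e2] at heq
    have hmod : (k+1) % N = (k + N - 1) % N :=
      ginj _ _ (Nat.mod_lt _ hNpos) (Nat.mod_lt _ hNpos) heq
    have hmeq : (k+1) ≡ (k + N - 1) [MOD N] := hmod
    have hdvd : N ∣ (k + N - 1) - (k + 1) := (Nat.modEq_iff_dvd' (by omega)).mp hmeq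
    have he : k + N - 1 - (k+1) = N - 2 := by omega
    rw [he] at hdvd
    have := Nat.le_of_dvd (by omega) hdvd
    omega
  have gnbr : ∀ k, H.neighborSet (g k) = {g (k+1), g (k + N - 1)} := by
    intro k
    have hsub : {g (k+1), g (k + N - 1)} ⊆ H.neighborSet (g k) := by
      intro x hx
      rcases hx with h | h
      · rw [h]; exact gadj k
      · rw [h]; exact gadj' k
    have hcard : ({g (k+1), g (k + N - 1)} : Set V).ncard = 2 :=
      Set.ncard_pair (gne2 k)
    exact (Set.eq_of_subset_of_ncard_le hsub (by rw [hH, hcard]) (Set.toFinite _)).symm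
  -- supp characterization
  have greach : ∀ k, H.Reachable u (g k) := by
    intro k
    induction k with
    | zero => exact Reachable.refl u
    | succ n ih => exact ih.trans (gadj n).reachable
  have hclosed : ∀ x y, (∃ i, i < N ∧ g i = x) → H.Adj x y → (∃ i, i < N ∧ g i = y) := by
    rintro x y ⟨i, hi, rfl⟩ hadj
    have hmem : y ∈ H.neighborSet (g i) := hadj
    rw [gnbr i, Set.mem_insert_iff, Set.mem_singleton_iff] at hmem
    rcases hmem with h | h
    · exact ⟨(i+1) % N, Nat.mod_lt _ hNpos, by rw [← gmod]; exact h.symm⟩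
    · exact ⟨(i + N - 1) % N, Nat.mod_lt _ hNpos, by rw [← gmod]; exact h.symm⟩
  have hwalk : ∀ (x y : V) (p : H.Walk x y), (∃ i, i < N ∧ g i = x) → (∃ i, i < N ∧ g i = y) := by
    intro x y p
    induction p with
    | nil => exact id
    | cons h p ih => intro hx; exact ih (hclosed _ _ hx h)
  have hsupp : ∀ v, v ∈ (H.connectedComponentMk u).supp ↔ ∃ i, i < N ∧ g i = v := by
    intro v
    constructor
    · intro hv
      rw [ConnectedComponent.mem_supp_iff] at hv
      have hreach : H.Reachable u v := (ConnectedComponent.exact hv).symm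
      obtain ⟨p⟩ := hreach
      exact hwalk u v p ⟨0, hNpos, g0⟩
    · rintro ⟨i, hi, rfl⟩
      rw [ConnectedComponent.mem_supp_iff]
      exact ConnectedComponent.sound (greach i).symm
  have hcardsupp : N = (H.connectedComponentMk u).supp.ncard := by
    have himg : (H.connectedComponentMk u).supp = ↑((Finset.range N).image g) := by
      ext v
      rw [hsupp v]
      simp only [Finset.coe_image, Finset.coe_range, Set.mem_image, Set.mem_Iio]
    rw [himg, Set.ncard_coe_finset]
    rw [Finset.card_image_of_injOn (fun a ha b hb hab =>
      ginj a b (by simpa using ha) (by simpa using hb) hab)]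
    exact (Finset.card_range N).symm
  exact ⟨N, g, hN3, hcardsupp, g0, glast, gperiod, ginj, gadj, hsupp, gnbr⟩

end CycleEnum





lemma ncard_diff_add_inter {α : Type*} (s t : Set α) (hs : s.Finite) :
    (s \ t).ncard + (s ∩ t).ncard = s.ncard := by
  rw [← Set.ncard_union_eq (by rw [Set.disjoint_left]; exact fun x hx hx2 => hx.2 hx2.2)
    (hs.diff) (hs.inter_of_left t), Set.diff_union_inter]

lemma periodic_mod {g : ℕ → V} {N : ℕ} (hper : ∀ k, g (k + N) = g k) :
    ∀ k, g k = g (k % N) := by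
  intro k
  by_cases hN : N = 0
  · rw [hN]; simp
  have hmult : ∀ q r, g (r + q * N) = g r := by
    intro q
    induction q with
    | zero => simp
    | succ n ih => intro r; rw [(by ring : r + (n+1) * N = (r + n * N) + N), hper, ih]
  conv_lhs => rw [← Nat.mod_add_div' k N]
  exact hmult _ _

lemma exists_matching [Fintype V] {G : SimpleGraph V} {F : G.Subgraph}
    (hcubic : ∀ v, (G.neighborSet v).ncard = 3) (h2 : ∀ v, (F.neighborSet v).ncard = 2) :
    ∃ m : V → V, ∀ v, (G.Adj v (m v) ∧ ¬ F.Adj v (m v)) ∧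
      (∀ w, G.Adj v w → ¬ F.Adj v w → w = m v) := by
  classical
  have key : ∀ v, ∃ q, (G.Adj v q ∧ ¬F.Adj v q) ∧ ∀ w, G.Adj v w → ¬F.Adj v w → w = q := by
    intro v
    have hsub : F.neighborSet v ⊆ G.neighborSet v := fun w hw => hw.adj_sub
    have hd : (G.neighborSet v \ F.neighborSet v).ncard = 1 := by
      rw [Set.ncard_diff hsub (Set.toFinite _), hcubic v, h2 v]
    obtain ⟨q, hq⟩ := Set.ncard_eq_one.mp hd
    have hqm : q ∈ G.neighborSet v \ F.neighborSet v := hq ▸ rfl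
    refine ⟨q, ⟨hqm.1, hqm.2⟩, fun w hw1 hw2 => ?_⟩
    have : w ∈ G.neighborSet v \ F.neighborSet v := ⟨hw1, hw2⟩
    rw [hq] at this
    exact this
  choose m hm1 hm2 using key
  exact ⟨m, fun v => ⟨hm1 v, hm2 v⟩⟩

lemma maxcut_bound {α K : Type*} [Fintype α] [Finite K] (m : α → α) (hm : ∀ v, m (m v) = v)
    (comp : α → K) (P : K → Prop) :
    ∃ σ : K → Bool, ∀ c,
      {v | (P (comp v) ∧ P (comp (m v)) ∧ comp (m v) ≠ comp v) ∧ comp v = c ∧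
        σ (comp v) = σ (comp (m v))}.ncard ≤
      {v | (P (comp v) ∧ P (comp (m v)) ∧ comp (m v) ≠ comp v) ∧ comp v = c ∧
        ¬ (σ (comp v) = σ (comp (m v)))}.ncard := by
  classical
  set U : Set α := {v | P (comp v) ∧ P (comp (m v)) ∧ comp (m v) ≠ comp v} with hU
  have hUsym : ∀ v, v ∈ U → m v ∈ U := by
    intro v hv
    refine ⟨hv.2.1, ?_, ?_⟩
    · rw [hm]; exact hv.1
    · rw [hm]; exact hv.2.2.symm
  have hminj : Function.Injective m := Function.LeftInverse.injective hm
  obtain ⟨σ, hσmax⟩ := Finite.exists_max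
    (fun σ : K → Bool => {v | v ∈ U ∧ σ (comp v) ≠ σ (comp (m v))}.ncard)
  refine ⟨σ, fun c => ?_⟩
  set A : Set α := {v | v ∈ U ∧ σ (comp v) ≠ σ (comp (m v))} with hA
  have hAmem : ∀ v, v ∈ A ↔ (v ∈ U ∧ σ (comp v) ≠ σ (comp (m v))) := fun v => Iff.rfl
  have hAsym : ∀ v, v ∈ A → m v ∈ A := by
    intro v hv
    refine ⟨hUsym v hv.1, ?_⟩
    rw [hm]
    exact hv.2.symm
  set T : Set α := {v | v ∈ U ∧ (comp v = c ∨ comp (m v) = c)} with hT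
  set σ' : K → Bool := fun d => if d = c then !(σ d) else σ d with hσ'
  have hB : {v | v ∈ U ∧ σ' (comp v) ≠ σ' (comp (m v))} = (A \ T) ∪ (T \ A) := by
    ext v
    simp only [Set.mem_setOf_eq, Set.mem_union, Set.mem_diff]
    by_cases hvU : v ∈ U
    · by_cases h1 : comp v = c
      · by_cases h2 : comp (m v) = c
        · exact absurd (h2.trans h1.symm) hvU.2.2
        · have e1 : σ' (comp v) = !(σ (comp v)) := by rw [hσ']; simp [h1]
          have e2 : σ' (comp (m v)) = σ (comp (m v)) := by rw [hσ']; simp [h2]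
          have hvT : v ∈ T := ⟨hvU, Or.inl h1⟩
          have key : ((!(σ (comp v))) ≠ σ (comp (m v))) ↔ ¬(σ (comp v) ≠ σ (comp (m v))) := by
            cases σ (comp v) <;> cases σ (comp (m v)) <;> simp
          constructor
          · intro hv
            have hne := hv.2
            rw [e1, e2] at hne
            exact Or.inr ⟨hvT, fun hAv => (key.mp hne) hAv.2⟩
          · rintro (⟨hAv, hTv⟩ | ⟨hTv, hAv⟩)
            · exact absurd hvT hTv
            · refine ⟨hvU, ?_⟩
              rw [e1, e2]
              exact key.mpr (fun hne => hAv ⟨hvU, hne⟩)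
      · by_cases h2 : comp (m v) = c
        · have e1 : σ' (comp v) = σ (comp v) := by rw [hσ']; simp [h1]
          have e2 : σ' (comp (m v)) = !(σ (comp (m v))) := by rw [hσ']; simp [h2]
          have hvT : v ∈ T := ⟨hvU, Or.inr h2⟩
          have key : (σ (comp v) ≠ (!(σ (comp (m v))))) ↔ ¬(σ (comp v) ≠ σ (comp (m v))) := by
            cases σ (comp v) <;> cases σ (comp (m v)) <;> simp
          constructor
          · intro hv
            have hne := hv.2
            rw [e1, e2] at hne
            exact Or.inr ⟨hvT, fun hAv => (key.mp hne) hAv.2⟩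
          · rintro (⟨hAv, hTv⟩ | ⟨hTv, hAv⟩)
            · exact absurd hvT hTv
            · refine ⟨hvU, ?_⟩
              rw [e1, e2]
              exact key.mpr (fun hne => hAv ⟨hvU, hne⟩)
        · have e1 : σ' (comp v) = σ (comp v) := by rw [hσ']; simp [h1]
          have e2 : σ' (comp (m v)) = σ (comp (m v)) := by rw [hσ']; simp [h2]
          have hvT : v ∉ T := fun ht => ht.2.elim h1 h2
          constructor
          · intro hv
            have hne := hv.2
            rw [e1, e2] at hne
            exact Or.inl ⟨⟨hvU, hne⟩, hvT⟩
          · rintro (⟨hAv, hTv⟩ | ⟨hTv, hAv⟩)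
            · refine ⟨hvU, ?_⟩
              rw [e1, e2]
              exact hAv.2
            · exact absurd hTv hvT
    · constructor
      · intro hv; exact absurd hv.1 hvU
      · rintro (⟨hAv, _⟩ | ⟨hTv, _⟩)
        · exact absurd hAv.1 hvU
        · exact absurd hTv.1 hvU
  -- counting from maximality
  have hd1 : Disjoint (A \ T) (T \ A) := by
    rw [Set.disjoint_left]
    exact fun x hx hx2 => hx.2 hx2.1
  have hfinA : A.Finite := Set.toFinite _
  have hfinT : T.Finite := Set.toFinite _
  have hcB : {v | v ∈ U ∧ σ' (comp v) ≠ σ' (comp (m v))}.ncard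
      = (A \ T).ncard + (T \ A).ncard := by
    rw [hB]
    exact Set.ncard_union_eq hd1 (hfinA.diff) (hfinT.diff)
  have hmax := hσmax σ'
  rw [hcB] at hmax
  have hA1 : (A \ T).ncard + (A ∩ T).ncard = A.ncard := ncard_diff_add_inter A T hfinA
  have hT1 : (T \ A).ncard + (T ∩ A).ncard = T.ncard := ncard_diff_add_inter T A hfinT
  have hAT : (A ∩ T).ncard = (T ∩ A).ncard := by rw [Set.inter_comm]
  have hTbound : T.ncard ≤ 2 * (T ∩ A).ncard := by omega
  -- doubling
  set Tc : Set α := {v | v ∈ U ∧ comp v = c} with hTc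
  have hTsplit : T = Tc ∪ m '' Tc := by
    ext v
    simp only [Set.mem_union, Set.mem_image, Set.mem_setOf_eq, hT, hTc]
    constructor
    · rintro ⟨hvU, h | h⟩
      · exact Or.inl ⟨hvU, h⟩
      · exact Or.inr ⟨m v, ⟨hUsym v hvU, h⟩, hm v⟩
    · rintro (⟨hvU, h⟩ | ⟨x, ⟨hxU, hxc⟩, rfl⟩)
      · exact ⟨hvU, Or.inl h⟩
      · exact ⟨hUsym x hxU, Or.inr (by rw [hm]; exact hxc)⟩
  have hTcd : Disjoint Tc (m '' Tc) := by
    rw [Set.disjoint_left]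
    rintro v ⟨hvU, hvc⟩ ⟨x, ⟨hxU, hxc⟩, rfl⟩
    exact hxU.2.2 (hvc.trans hxc.symm)
  have hTcount : T.ncard = 2 * Tc.ncard := by
    rw [hTsplit, Set.ncard_union_eq hTcd (Set.toFinite _) (Set.toFinite _),
      Set.ncard_image_of_injective _ hminj]
    ring
  -- same for T ∩ A
  set Ac : Set α := {v | v ∈ U ∧ comp v = c ∧ σ (comp v) ≠ σ (comp (m v))} with hAc
  have hTAsplit : T ∩ A = Ac ∪ m '' Ac := by
    ext v
    simp only [Set.mem_union, Set.mem_image, Set.mem_setOf_eq, Set.mem_inter_iff, hT, hTc, hAc, hA]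
    constructor
    · rintro ⟨⟨hvU, h | h⟩, ⟨_, hne⟩⟩
      · exact Or.inl ⟨hvU, h, hne⟩
      · exact Or.inr ⟨m v, ⟨hUsym v hvU, h, by rw [hm]; exact hne.symm⟩, hm v⟩
    · rintro (⟨hvU, h, hne⟩ | ⟨x, ⟨hxU, hxc, hxne⟩, rfl⟩)
      · exact ⟨⟨hvU, Or.inl h⟩, hvU, hne⟩
      · refine ⟨⟨hUsym x hxU, Or.inr (by rw [hm]; exact hxc)⟩, hUsym x hxU, by rw [hm]; exact hxne.symm⟩
  have hAcd : Disjoint Ac (m '' Ac) := by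
    rw [Set.disjoint_left]
    rintro v ⟨hvU, hvc, _⟩ ⟨x, ⟨hxU, hxc, _⟩, rfl⟩
    exact hxU.2.2 (hvc.trans hxc.symm)
  have hTAcount : (T ∩ A).ncard = 2 * Ac.ncard := by
    rw [hTAsplit, Set.ncard_union_eq hAcd (Set.toFinite _) (Set.toFinite _),
      Set.ncard_image_of_injective _ hminj]
    ring
  -- conclude
  have hTcbound : Tc.ncard ≤ 2 * Ac.ncard := by omega
  -- final sets
  have hgoalL : {v | (P (comp v) ∧ P (comp (m v)) ∧ comp (m v) ≠ comp v) ∧ comp v = c ∧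
      σ (comp v) = σ (comp (m v))} = Tc \ Ac := by
    ext v
    simp only [Set.mem_setOf_eq, Set.mem_diff, hTc, hAc, hU]
    constructor
    · rintro ⟨hvU, hc, heq⟩
      exact ⟨⟨hvU, hc⟩, fun hx => hx.2.2 heq⟩
    · rintro ⟨⟨hvU, hc⟩, hn⟩
      refine ⟨hvU, hc, ?_⟩
      by_contra hne
      exact hn ⟨hvU, hc, hne⟩
  have hgoalR : {v | (P (comp v) ∧ P (comp (m v)) ∧ comp (m v) ≠ comp v) ∧ comp v = c ∧
      ¬ (σ (comp v) = σ (comp (m v)))} = Ac := by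
    ext v
    simp only [Set.mem_setOf_eq, hAc, hU]
  rw [hgoalL, hgoalR]
  have hsplit2 : (Tc \ Ac).ncard + (Tc ∩ Ac).ncard = Tc.ncard :=
    ncard_diff_add_inter Tc Ac (Set.toFinite _)
  have hsub2 : Ac ⊆ Tc := fun v hv => ⟨hv.1, hv.2.1⟩
  have : Tc ∩ Ac = Ac := Set.inter_eq_self_of_subset_right hsub2
  rw [this] at hsplit2
  omega

lemma exists_free_edge {N : ℕ} {g : ℕ → V} {D : Set V}
    (hginj : ∀ i j, i < N → j < N → g i = g j → i = j)
    (hper : ∀ k, g (k + N) = g k)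
    (hD : ∀ d ∈ D, ∃ i, i < N ∧ g i = d)
    (hDfin : D.Finite)
    (hcard : 2 * D.ncard < N) :
    ∃ i, i < N ∧ g i ∉ D ∧ g (i+1) ∉ D := by
  classical
  by_contra hcon
  push_neg at hcon
  have hNpos : 0 < N := by omega
  -- index function
  have hidx : ∀ d ∈ D, ∃! i, i < N ∧ g i = d := by
    intro d hd
    obtain ⟨i, hi, hgi⟩ := hD d hd
    exact ⟨i, ⟨hi, hgi⟩, fun j hj => hginj j i hj.1 hi (hj.2.trans hgi.symm)⟩
  choose idx hidx1 hidx2 using hD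
  -- the covering map
  set φ : ℕ → V := fun i => if g i ∈ D then g i else g (i+1) with hφ
  have hmaps : ∀ i ∈ Finset.range N, φ i ∈ hDfin.toFinset := by
    intro i hi
    rw [Finset.mem_range] at hi
    rw [Set.Finite.mem_toFinset]
    by_cases h : g i ∈ D
    · rw [hφ]; simp only [if_pos h]; exact h
    · rw [hφ]; simp only [if_neg h]
      exact hcon i hi h
  have hfiber : ∀ d ∈ hDfin.toFinset,
      ((Finset.range N).filter (fun i => φ i = d)).card ≤ 2 := by
    intro d hd
    rw [Set.Finite.mem_toFinset] at hd
    have hsub : ((Finset.range N).filter (fun i => φ i = d)) ⊆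
        {idx d hd, (idx d hd + N - 1) % N} := by
      intro i hi
      rw [Finset.mem_filter, Finset.mem_range] at hi
      obtain ⟨hiN, hφi⟩ := hi
      rw [Finset.mem_insert, Finset.mem_singleton]
      by_cases h : g i ∈ D
      · left
        rw [hφ] at hφi; simp only [if_pos h] at hφi
        exact hginj i _ hiN (hidx1 d hd) (hφi.trans (hidx2 d hd).symm)
      · right
        rw [hφ] at hφi; simp only [if_neg h] at hφi
        -- g (i+1) = d
        have hmod : g ((i+1) % N) = d := by rw [← periodic_mod hper]; exact hφi
        have hlt : (i+1) % N < N := Nat.mod_lt _ hNpos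
        have hidxeq : (i+1) % N = idx d hd :=
          hginj _ _ hlt (hidx1 d hd) (hmod.trans (hidx2 d hd).symm)
        by_cases hiN1 : i + 1 = N
        · have h0 : idx d hd = 0 := by rw [← hidxeq, hiN1, Nat.mod_self]
          rw [h0, Nat.zero_add, Nat.mod_eq_of_lt (by omega)]
          omega
        · have hj : idx d hd = i + 1 := by rw [← hidxeq, Nat.mod_eq_of_lt (by omega)]
          rw [hj, (by omega : i + 1 + N - 1 = i + N), Nat.add_mod_right, Nat.mod_eq_of_lt hiN]
    calc ((Finset.range N).filter (fun i => φ i = d)).card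
        ≤ ({idx d hd, (idx d hd + N - 1) % N} : Finset ℕ).card := Finset.card_le_card hsub
      _ ≤ 2 := Finset.card_insert_le _ _ |>.trans (by simp)
  have hle := Finset.card_le_mul_card_image_of_maps_to hmaps 2 hfiber
  rw [Finset.card_range] at hle
  have hDcard : hDfin.toFinset.card = D.ncard := (Set.ncard_eq_toFinset_card D hDfin).symm
  omega


lemma two_le_edist_of_no_common {G : SimpleGraph V} {e f : G.edgeSet} (hne : e ≠ f)
    (h : ∀ v : V, v ∈ (e : Sym2 V) → v ∈ (f : Sym2 V) → False) :
    (2 : ℕ∞) ≤ G.lineGraph.edist e f := by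
  apply enat_two_le
  · exact fun h0 => hne (SimpleGraph.edist_eq_zero_iff.mp h0)
  · intro h1
    obtain ⟨-, x, hx1, hx2⟩ :=
      SimpleGraph.lineGraph_adj_iff_exists.mp (SimpleGraph.edist_eq_one_iff_adj.mp h1)
    exact h x hx1 hx2

/-- Every cubic graph having a 2-factor admits a (1,1,1,3,3)-packing edge-coloring. -/
theorem statement_0 {V : Type*} [Fintype V] (G : SimpleGraph V)
    (hconn : G.Connected) (hcubic : IsCubicGraph G)
    (F : G.Subgraph) (hF : IsTwoFactor F) :
    HasPackingEdgeColoring G [1, 1, 1, 3, 3] := by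
  classical
  obtain ⟨hsp, h2⟩ := hF
  -- the perfect matching function
  obtain ⟨m, hm⟩ := exists_matching hcubic h2
  have m_adj : ∀ v, G.Adj v (m v) := fun v => (hm v).1.1
  have m_nF : ∀ v, ¬ F.Adj v (m v) := fun v => (hm v).1.2
  have m_uniq : ∀ v w, G.Adj v w → ¬ F.Adj v w → w = m v := fun v w h1 h2' => (hm v).2 w h1 h2'
  have m_invol : ∀ v, m (m v) = v := fun v =>
    (m_uniq (m v) v (m_adj v).symm (fun h => m_nF v h.symm)).symm
  set H := F.spanningCoe with hHdef
  have hHadj : ∀ {v w}, H.Adj v w ↔ F.Adj v w := fun {v w} => Iff.rfl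
  have hH2 : ∀ v, (H.neighborSet v).ncard = 2 := by
    intro v
    have hset : H.neighborSet v = F.neighborSet v := rfl
    rw [hset]; exact h2 v
  have adj_cases : ∀ v w, G.Adj v w → F.Adj v w ∨ w = m v := by
    intro v w h
    by_cases hf : F.Adj v w
    · exact Or.inl hf
    · exact Or.inr (m_uniq v w h hf)
  set comp : V → H.ConnectedComponent := H.connectedComponentMk with hcompdef
  have hFcomp : ∀ {v w}, F.Adj v w → comp v = comp w :=
    fun h => ConnectedComponent.sound (hHadj.mpr h).reachable
  -- max cut over components
  obtain ⟨σ, hσ⟩ := maxcut_bound m m_invol comp (fun c => Odd c.supp.ncard)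
  set D : H.ConnectedComponent → Set V := fun c =>
    {v | (Odd (comp v).supp.ncard ∧ Odd (comp (m v)).supp.ncard ∧ comp (m v) ≠ comp v) ∧
      comp v = c ∧ σ (comp v) = σ (comp (m v))} with hDdef
  have mem_D : ∀ c v, v ∈ D c ↔
      ((Odd (comp v).supp.ncard ∧ Odd (comp (m v)).supp.ncard ∧ comp (m v) ≠ comp v) ∧
      comp v = c ∧ σ (comp v) = σ (comp (m v))) := fun c v => Iff.rfl
  have hDbound : ∀ c : H.ConnectedComponent, Odd c.supp.ncard →
      2 * (D c).ncard < c.supp.ncard := by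
    intro c hodd
    have hle : (D c).ncard ≤ {v | (Odd (comp v).supp.ncard ∧ Odd (comp (m v)).supp.ncard ∧
      comp (m v) ≠ comp v) ∧ comp v = c ∧ ¬ (σ (comp v) = σ (comp (m v)))}.ncard := hσ c
    set Cr : Set V := {v | (Odd (comp v).supp.ncard ∧ Odd (comp (m v)).supp.ncard ∧
      comp (m v) ≠ comp v) ∧ comp v = c ∧ ¬ (σ (comp v) = σ (comp (m v)))} with hCr
    have hdisj : Disjoint (D c) Cr := by
      rw [Set.disjoint_left]
      intro v hv hv2
      exact hv2.2.2 hv.2.2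
    have hsub : (D c) ∪ Cr ⊆ c.supp := by
      rintro v (hv | hv)
      · exact (ConnectedComponent.mem_supp_iff c v).mpr ((mem_D c v).mp hv).2.1
      · exact (ConnectedComponent.mem_supp_iff c v).mpr hv.2.1
    have hunion : (D c).ncard + Cr.ncard = ((D c) ∪ Cr).ncard :=
      (Set.ncard_union_eq hdisj (Set.toFinite _) (Set.toFinite _)).symm
    have hlesupp : ((D c) ∪ Cr).ncard ≤ c.supp.ncard :=
      Set.ncard_le_ncard hsub (Set.toFinite _)
    obtain ⟨t, ht⟩ := hodd
    omega
  -- per-component cyclic enumerations with safe wrap edge on odd components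
  have comp_data : ∀ c : H.ConnectedComponent, ∃ (N : ℕ) (g : ℕ → V),
      3 ≤ N ∧ N = c.supp.ncard ∧
      (∀ k, g (k + N) = g k) ∧
      (∀ i j, i < N → j < N → g i = g j → i = j) ∧
      (∀ k, H.Adj (g k) (g (k+1))) ∧
      (∀ v, v ∈ c.supp ↔ ∃ i, i < N ∧ g i = v) ∧
      (∀ k, H.neighborSet (g k) = {g (k+1), g (k+N-1)}) ∧
      (Odd c.supp.ncard → g (N-1) ∉ D c ∧ g 0 ∉ D c) := by
    intro c
    obtain ⟨v0, hv0⟩ := c.exists_rep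
    have hv0' : H.connectedComponentMk v0 = c := hv0
    have hnb : (H.neighborSet v0).Nonempty :=
      Set.nonempty_of_ncard_ne_zero (by rw [hH2]; omega)
    obtain ⟨w0, hw0⟩ := hnb
    obtain ⟨N, g, hN3, hNcard, hg0, hglast, hper, hinj, hadj, hsupp, hnbr⟩ :=
      cycle_enum hH2 hw0
    rw [hv0'] at hNcard hsupp
    by_cases hodd : Odd c.supp.ncard
    · have hfree := exists_free_edge hinj hper
        (fun d (hd : d ∈ D c) =>
          (hsupp d).mp ((ConnectedComponent.mem_supp_iff c d).mpr ((mem_D c d).mp hd).2.1))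
        (Set.toFinite _)
        (by rw [hNcard]; exact hDbound c hodd)
      obtain ⟨i, hiN, hsafe1, hsafe2⟩ := hfree
      have hadj2 : H.Adj (g (i+1)) (g i) := (hadj i).symm
      obtain ⟨N', g', hN3', hNcard', hg0', hglast', hper', hinj', hadj', hsupp', hnbr'⟩ :=
        cycle_enum hH2 hadj2
      have hmem : g (i+1) ∈ c.supp := (hsupp _).mpr
        ⟨(i+1) % N, Nat.mod_lt _ (by omega), (periodic_mod hper (i+1)).symm⟩
      have hc' : H.connectedComponentMk (g (i+1)) = c :=
        (ConnectedComponent.mem_supp_iff c _).mp hmem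
      rw [hc'] at hNcard' hsupp'
      refine ⟨N', g', hN3', hNcard', hper', hinj', hadj', hsupp', hnbr', fun _ => ?_⟩
      rw [hglast', hg0']
      exact ⟨hsafe1, hsafe2⟩
    · exact ⟨N, g, hN3, hNcard, hper, hinj, hadj, hsupp, hnbr, fun ho => absurd ho hodd⟩
  choose Nc gc hc3 hcN hcper hcinj hcadj hcsupp hcnbr hcsafe using comp_data
  have hgN0 : ∀ c, gc c (Nc c) = gc c 0 := by
    intro c
    have := hcper c 0
    rwa [Nat.zero_add] at this
  -- every F-edge is a consecutive pair in its component's enumeration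
  have edge_data : ∀ (z : Sym2 V), z ∈ F.edgeSet → ∃ (c : H.ConnectedComponent) (i : ℕ),
      i < Nc c ∧ z = s(gc c i, gc c (i+1)) := by
    intro z hz
    induction z using Sym2.ind with
    | _ a b =>
      have hab : F.Adj a b := Subgraph.mem_edgeSet.mp hz
      have ha : a ∈ (comp a).supp := (ConnectedComponent.mem_supp_iff _ a).mpr rfl
      obtain ⟨i, hiN, hgi⟩ := (hcsupp (comp a) a).mp ha
      have hNpos : 0 < Nc (comp a) := by have := hc3 (comp a); omega
      have hbnbr : b ∈ H.neighborSet a := hHadj.mpr hab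
      rw [← hgi, hcnbr (comp a) i, Set.mem_insert_iff, Set.mem_singleton_iff] at hbnbr
      rcases hbnbr with hb | hb
      · exact ⟨comp a, i, hiN, by rw [hgi, ← hb]⟩
      · refine ⟨comp a, (i + Nc (comp a) - 1) % Nc (comp a), Nat.mod_lt _ hNpos, ?_⟩
        have e1 : gc (comp a) ((i + Nc (comp a) - 1) % Nc (comp a)) = b := by
          rw [← periodic_mod (hcper (comp a))]
          exact hb.symm
        have e2 : gc (comp a) ((i + Nc (comp a) - 1) % Nc (comp a) + 1) = a := by
          have hmm : ((i + Nc (comp a) - 1) % Nc (comp a) + 1) % Nc (comp a)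
              = i % Nc (comp a) := by
            rw [Nat.mod_add_mod, (by omega : i + Nc (comp a) - 1 + 1 = i + Nc (comp a)),
              Nat.add_mod_right]
          rw [periodic_mod (hcper (comp a)) _, hmm, Nat.mod_eq_of_lt hiN]
          exact hgi
        rw [e1, e2, Sym2.eq_swap]
  have edge_comp : ∀ (c : H.ConnectedComponent) i, i < Nc c →
      ∀ v, v ∈ (s(gc c i, gc c (i+1)) : Sym2 V) → comp v = c := by
    intro c i hi v hv
    have hNpos : 0 < Nc c := by have := hc3 c; omega
    rw [Sym2.mem_iff] at hv
    rcases hv with rfl | rfl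
    · exact (ConnectedComponent.mem_supp_iff c _).mp ((hcsupp c _).mpr ⟨i, hi, rfl⟩)
    · exact (ConnectedComponent.mem_supp_iff c _).mp ((hcsupp c _).mpr
        ⟨(i+1) % Nc c, Nat.mod_lt _ hNpos, (periodic_mod (hcper c) (i+1)).symm⟩)
  have edge_uniq : ∀ (c : H.ConnectedComponent) i j, i < Nc c → j < Nc c →
      (s(gc c i, gc c (i+1)) : Sym2 V) = s(gc c j, gc c (j+1)) → i = j := by
    intro c i j hi hj heq
    have hN3 := hc3 c
    rw [Sym2.eq_iff] at heq
    rcases heq with ⟨h1, _⟩ | ⟨h1, h2⟩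
    · exact hcinj c i j hi hj h1
    · by_cases hj1 : j + 1 = Nc c
      · rw [hj1, hgN0 c] at h1
        have hi0 : i = 0 := hcinj c i 0 hi (by omega) h1
        subst hi0
        have h12 : (1 : ℕ) = j := hcinj c 1 j (by omega) hj h2
        omega
      · have hij : i = j + 1 := hcinj c i (j+1) hi (by omega) h1
        by_cases hi1 : i + 1 = Nc c
        · rw [hi1, hgN0 c] at h2
          have hj0 : (0:ℕ) = j := hcinj c 0 j (by omega) hj h2
          omega
        · have : i + 1 = j := hcinj c (i+1) j (by omega) hj h2
          omega
  -- matching edges are determined by either endpoint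
  have matching_edge : ∀ (z : Sym2 V), z ∈ G.edgeSet → z ∉ F.edgeSet →
      ∀ v ∈ z, z = s(v, m v) := by
    intro z hz hznF
    induction z using Sym2.ind with
    | _ a b =>
      intro v hv
      have hab : G.Adj a b := (G.mem_edgeSet).mp hz
      rw [Sym2.mem_iff] at hv
      rcases hv with rfl | rfl
      · have : b = m v := m_uniq v b hab (fun hf => hznF (Subgraph.mem_edgeSet.mpr hf))
        rw [this]
      · have : a = m v := m_uniq v a hab.symm
          (fun hf => hznF (Subgraph.mem_edgeSet.mpr hf.symm))
        rw [Sym2.eq_swap, this]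
  -- the coloring
  have color_exists : ∀ e : G.edgeSet, ∃ k : Fin 5,
      (((e : Sym2 V) ∉ F.edgeSet) ∧ k = 0) ∨
      (∃ (c : H.ConnectedComponent) (i : ℕ), i < Nc c ∧
        (e : Sym2 V) = s(gc c i, gc c (i+1)) ∧
        ((Odd c.supp.ncard ∧ i = Nc c - 1 ∧ k = (if σ c then 3 else 4)) ∨
         (¬(Odd c.supp.ncard ∧ i = Nc c - 1) ∧ ((i % 2 = 0 ∧ k = 1) ∨ (i % 2 = 1 ∧ k = 2))))) := by
    intro e
    by_cases he : (e : Sym2 V) ∈ F.edgeSet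
    · obtain ⟨c, i, hi, hrep⟩ := edge_data _ he
      by_cases hwrap : Odd c.supp.ncard ∧ i = Nc c - 1
      · exact ⟨if σ c then 3 else 4, Or.inr ⟨c, i, hi, hrep, Or.inl ⟨hwrap.1, hwrap.2, rfl⟩⟩⟩
      · by_cases hpar : i % 2 = 0
        · exact ⟨1, Or.inr ⟨c, i, hi, hrep, Or.inr ⟨hwrap, Or.inl ⟨hpar, rfl⟩⟩⟩⟩
        · exact ⟨2, Or.inr ⟨c, i, hi, hrep, Or.inr ⟨hwrap, Or.inr ⟨by omega, rfl⟩⟩⟩⟩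
    · exact ⟨0, Or.inl ⟨he, rfl⟩⟩
  choose col hcol using color_exists
  refine ⟨col, ?_⟩
  intro e f hne hcef
  rcases hcol e with ⟨heF, hek⟩ | ⟨ce, ie, hie, herep, hespec⟩
  · rcases hcol f with ⟨hfF, hfk⟩ | ⟨cf, jf, hjf, hfrep, hfspec⟩
    · -- both matching edges
      have hnc : ∀ v : V, v ∈ (e : Sym2 V) → v ∈ (f : Sym2 V) → False := by
        intro v hv1 hv2
        have he1 := matching_edge _ e.2 heF v hv1
        have hf1 := matching_edge _ f.2 hfF v hv2
        exact hne (Subtype.ext (he1.trans hf1.symm))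
      have h2le := two_le_edist_of_no_common hne hnc
      have hval : [1,1,1,3,3].get (col e) = 1 := by rw [hek]; rfl
      rw [hval, Nat.cast_one, one_add_one_eq_two]
      exact h2le
    · -- clash: 0 vs cyclic colors
      exfalso
      have h0 : (0 : Fin 5) = col f := hek ▸ hcef
      rcases hfspec with ⟨-, -, hk⟩ | ⟨-, hpar⟩
      · have h03 := h0.trans hk
        cases hb : σ cf
        · rw [hb] at h03; exact absurd h03 (by decide)
        · rw [hb] at h03; exact absurd h03 (by decide)
      · rcases hpar with ⟨-, hk⟩ | ⟨-, hk⟩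
        · exact absurd (h0.trans hk) (by decide)
        · exact absurd (h0.trans hk) (by decide)
  · rcases hcol f with ⟨hfF, hfk⟩ | ⟨cf, jf, hjf, hfrep, hfspec⟩
    · -- clash: cyclic colors vs 0
      exfalso
      have h0 : col e = (0 : Fin 5) := hcef.trans hfk
      rcases hespec with ⟨-, -, hk⟩ | ⟨-, hpar⟩
      · have h03 := hk.symm.trans h0
        cases hb : σ ce
        · rw [hb] at h03; exact absurd h03 (by decide)
        · rw [hb] at h03; exact absurd h03 (by decide)
      · rcases hpar with ⟨-, hk⟩ | ⟨-, hk⟩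
        · exact absurd (hk.symm.trans h0) (by decide)
        · exact absurd (hk.symm.trans h0) (by decide)
    · -- both cyclic
      rcases hespec with ⟨hodde, hielast, hek⟩ | ⟨hnwe, hpare⟩
      · rcases hfspec with ⟨hoddf, hjflast, hfk⟩ | ⟨hnwf, hparf⟩
        · -- both wrap edges
          rw [hek, hfk] at hcef
          have hσeq : σ ce = σ cf := by
            cases hb1 : σ ce <;> cases hb2 : σ cf
            · rfl
            · exfalso; rw [hb1, hb2] at hcef; exact absurd hcef (by decide)
            · exfalso; rw [hb1, hb2] at hcef; exact absurd hcef (by decide)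
            · rfl
          by_cases hcc : ce = cf
          · exfalso
            subst hcc
            have hij : ie = jf := by rw [hielast, hjflast]
            exact hne (Subtype.ext (by rw [herep, hfrep, hij]))
          · -- distance at least 4
            have hNe3 := hc3 ce
            have hNf3 := hc3 cf
            have Hcond : ∀ u w : V, u ∈ (e : Sym2 V) → w ∈ (f : Sym2 V) →
                u ≠ w ∧ ¬ G.Adj u w ∧ ∀ x, ¬(G.Adj u x ∧ G.Adj x w) := by
              intro u w hu hw
              have hucomp : comp u = ce := edge_comp ce ie hie u (by rw [← herep]; exact hu)
              have hwcomp : comp w = cf := edge_comp cf jf hjf w (by rw [← hfrep]; exact hw)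
              have hu' : u = gc ce (Nc ce - 1) ∨ u = gc ce 0 := by
                rw [herep, hielast, Sym2.mem_iff] at hu
                rcases hu with rfl | rfl
                · exact Or.inl rfl
                · right; rw [(by omega : Nc ce - 1 + 1 = Nc ce), hgN0]
              have hw' : w = gc cf (Nc cf - 1) ∨ w = gc cf 0 := by
                rw [hfrep, hjflast, Sym2.mem_iff] at hw
                rcases hw with rfl | rfl
                · exact Or.inl rfl
                · right; rw [(by omega : Nc cf - 1 + 1 = Nc cf), hgN0]
              have huD : u ∉ D ce := by
                rcases hu' with rfl | rfl
                exacts [(hcsafe ce hodde).1, (hcsafe ce hodde).2]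
              have hwD : w ∉ D cf := by
                rcases hw' with rfl | rfl
                exacts [(hcsafe cf hoddf).1, (hcsafe cf hoddf).2]
              have hne_uw : u ≠ w := fun hequ => hcc (by rw [← hucomp, hequ, hwcomp])
              have hnadj : ¬ G.Adj u w := by
                intro hadj
                rcases adj_cases u w hadj with hf1 | hf1
                · exact hcc (by rw [← hucomp, ← hwcomp]; exact hFcomp hf1)
                · apply huD
                  rw [mem_D ce u, ← hf1]
                  refine ⟨⟨?_, ?_, ?_⟩, hucomp, ?_⟩
                  · rw [hucomp]; exact hodde
                  · rw [hwcomp]; exact hoddf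
                  · rw [hucomp, hwcomp]; exact fun hcf => hcc hcf.symm
                  · rw [hucomp, hwcomp, hσeq]
              refine ⟨hne_uw, hnadj, ?_⟩
              rintro x ⟨hux, hxw⟩
              rcases adj_cases u x hux with hf1 | hf1
              · have hxcomp : comp x = ce := by rw [← hFcomp hf1]; exact hucomp
                rcases adj_cases x w hxw with hf2 | hf2
                · exact hcc (hxcomp.symm.trans ((hFcomp hf2).trans hwcomp))
                · apply hwD
                  have hmx : m w = x := by rw [hf2, m_invol]
                  rw [mem_D cf w, hmx]
                  refine ⟨⟨?_, ?_, ?_⟩, hwcomp, ?_⟩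
                  · rw [hwcomp]; exact hoddf
                  · rw [hxcomp]; exact hodde
                  · rw [hxcomp, hwcomp]; exact fun h => hcc h
                  · rw [hwcomp, hxcomp]; exact hσeq.symm
              · rcases adj_cases x w hxw with hf2 | hf2
                · apply huD
                  have hxcomp : comp x = cf := (hFcomp hf2).trans hwcomp
                  rw [mem_D ce u, ← hf1]
                  refine ⟨⟨?_, ?_, ?_⟩, hucomp, ?_⟩
                  · rw [hucomp]; exact hodde
                  · rw [hxcomp]; exact hoddf
                  · rw [hxcomp, hucomp]; exact fun h => hcc h.symm
                  · rw [hucomp, hxcomp]; exact hσeq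
                · exact hne_uw (hf2.trans (by rw [hf1, m_invol])).symm
            have h4 := four_le_lineGraph_edist hne Hcond
            have hval : [1,1,1,3,3].get (col e) = 3 := by
              rw [hek]
              cases hb : σ ce <;> rfl
            rw [hval]
            calc ((3:ℕ):ℕ∞) + 1 = 4 := by norm_num
            _ ≤ _ := h4
        · -- wrap vs parity : clash
          exfalso
          rcases hparf with ⟨-, hk2⟩ | ⟨-, hk2⟩
          · rw [hek, hk2] at hcef
            cases hb : σ ce <;> rw [hb] at hcef <;> exact absurd hcef (by decide)
          · rw [hek, hk2] at hcef
            cases hb : σ ce <;> rw [hb] at hcef <;> exact absurd hcef (by decide)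
      · rcases hfspec with ⟨hoddf, hjflast, hfk⟩ | ⟨hnwf, hparf⟩
        · -- parity vs wrap : clash
          exfalso
          rcases hpare with ⟨-, hk1⟩ | ⟨-, hk1⟩
          · rw [hk1, hfk] at hcef
            cases hb : σ cf <;> rw [hb] at hcef <;> exact absurd hcef (by decide)
          · rw [hk1, hfk] at hcef
            cases hb : σ cf <;> rw [hb] at hcef <;> exact absurd hcef (by decide)
        · -- both parity
          have hpar_eq : ie % 2 = jf % 2 := by
            rcases hpare with ⟨h1, hk1⟩ | ⟨h1, hk1⟩ <;> rcases hparf with ⟨h2, hk2⟩ | ⟨h2, hk2⟩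
            · omega
            · exfalso; rw [hk1, hk2] at hcef; exact absurd hcef (by decide)
            · exfalso; rw [hk1, hk2] at hcef; exact absurd hcef (by decide)
            · omega
          have hEF : ¬ ((e : Sym2 V) = (f : Sym2 V)) := fun h => hne (Subtype.ext h)
          have hnc : ∀ v : V, v ∈ (e : Sym2 V) → v ∈ (f : Sym2 V) → False := by
            intro v hv1 hv2
            have hvce : comp v = ce := edge_comp ce ie hie v (by rw [← herep]; exact hv1)
            have hvcf : comp v = cf := edge_comp cf jf hjf v (by rw [← hfrep]; exact hv2)
            have hcc : ce = cf := hvce.symm.trans hvcf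
            subst hcc
            have hN3 := hc3 ce
            have hOddiff : Odd ce.supp.ncard ↔ Odd (Nc ce) := by rw [hcN ce]
            rw [herep, Sym2.mem_iff] at hv1
            rw [hfrep, Sym2.mem_iff] at hv2
            rcases hv1 with h1 | h1 <;> rcases hv2 with h2 | h2
            · have hij : ie = jf := hcinj ce ie jf hie hjf (h1.symm.trans h2)
              exact hEF (by rw [herep, hfrep, hij])
            · by_cases hj1 : jf + 1 = Nc ce
              · have hie0 : ie = 0 := hcinj ce ie 0 hie (by omega)
                  (by rw [← h1, h2, hj1, hgN0])
                have hNodd : Odd (Nc ce) := Nat.odd_iff.mpr (by omega)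
                exact hnwf ⟨hOddiff.mpr hNodd, by omega⟩
              · have : ie = jf + 1 := hcinj ce ie (jf+1) hie (by omega) (by rw [← h1, h2])
                omega
            · by_cases hi1 : ie + 1 = Nc ce
              · have hjf0 : jf = 0 := hcinj ce jf 0 hjf (by omega)
                  (by rw [← h2, h1, hi1, hgN0])
                have hNodd : Odd (Nc ce) := Nat.odd_iff.mpr (by omega)
                exact hnwe ⟨hOddiff.mpr hNodd, by omega⟩
              · have : jf = ie + 1 := hcinj ce jf (ie+1) hjf (by omega) (by rw [← h2, h1])
                omega
            · by_cases hi1 : ie + 1 = Nc ce <;> by_cases hj1 : jf + 1 = Nc ce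
              · have hij : ie = jf := by omega
                exact hEF (by rw [herep, hfrep, hij])
              · have h0 : (0:ℕ) = jf + 1 := hcinj ce 0 (jf+1) (by omega) (by omega)
                  (by rw [← hgN0, ← hi1, ← h1, h2])
                omega
              · have h0 : (0:ℕ) = ie + 1 := hcinj ce 0 (ie+1) (by omega) (by omega)
                  (by rw [← hgN0, ← hj1, ← h2, h1])
                omega
              · have hij : ie + 1 = jf + 1 := hcinj ce (ie+1) (jf+1) (by omega) (by omega)
                  (h1.symm.trans h2)
                have hij' : ie = jf := by omega
                exact hEF (by rw [herep, hfrep, hij'])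
          have h2le := two_le_edist_of_no_common hne hnc
          rcases hpare with ⟨h1, hk1⟩ | ⟨h1, hk1⟩
          · have hval : [1,1,1,3,3].get (col e) = 1 := by rw [hk1]; rfl
            rw [hval, Nat.cast_one, one_add_one_eq_two]
            exact h2le
          · have hval : [1,1,1,3,3].get (col e) = 1 := by rw [hk1]; rfl
            rw [hval, Nat.cast_one, one_add_one_eq_two]
            exact h2le
end

section
/- Let G be a cubic graph of oddness 2 having a 2-factor whose odd cycles are exactly two cycles C_1 and C_2. If C_1 or C_2 has length at least 13, then G admits a (1,1,1,3)-packing edge-coloring. -/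
open SimpleGraph

variable {V : Type*}

open SimpleGraph

namespace PackingAux

variable {V : Type*}

private lemma mem_of_ncard_le_one [Finite V] {s : Set V} (h : s.ncard ≤ 1)
    {a b : V} (ha : a ∈ s) (hb : b ∈ s) : a = b :=
  (Set.ncard_le_one_iff (Set.toFinite s)).mp h ha hb

private lemma eq_of_ncard_le_two [Finite V] {s : Set V} (h : s.ncard ≤ 2)
    {z a b : V} (hz : z ∈ s) (ha : a ∈ s) (hb : b ∈ s) (hza : z ≠ a) (hzb : z ≠ b) : a = b := by
  by_contra hab
  have hsub : ({z, a, b} : Set V) ⊆ s := by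
    intro w hw
    rcases hw with rfl | rfl | rfl <;> assumption
  have h3 : ({z, a, b} : Set V).ncard = 3 := by
    rw [Set.ncard_insert_of_notMem (by simp [hza, hzb]) (Set.toFinite _),
      Set.ncard_insert_of_notMem (by simp [hab]) (Set.toFinite _), Set.ncard_singleton]
  have := Set.ncard_le_ncard hsub (Set.toFinite s)
  omega

private lemma exists_pred {H : SimpleGraph V} {x a : V} {k : ℕ}
    (hr : H.Reachable x a) (hd : H.dist x a = k + 1) :
    ∃ z, H.Adj z a ∧ H.Reachable x z ∧ H.dist x z = k := by
  obtain ⟨p, hp⟩ := hr.exists_walk_length_eq_dist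
  cases hq : p.reverse with
  | nil =>
    have h0 := congrArg Walk.length hq
    simp only [Walk.length_reverse, Walk.length_nil] at h0
    rw [hp] at h0
    omega
  | @cons _ z _ h q =>
    have hlen : q.length = k := by
      have := congrArg Walk.length hq
      simp only [Walk.length_reverse, Walk.length_cons] at this
      omega
    have hrz : H.Reachable x z := ⟨q.reverse⟩
    have hle : H.dist x z ≤ k := by
      have := dist_le q.reverse
      simpa [hlen] using this
    have hge : k ≤ H.dist x z := by
      obtain ⟨r, hrr⟩ := hrz.exists_walk_length_eq_dist
      have := dist_le (r.concat h.symm)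
      rw [Walk.length_concat, hrr] at this
      omega
    exact ⟨z, h.symm, hrz, le_antisymm hle hge⟩

private lemma dist_adj_le {H : SimpleGraph V} {x a b : V} (hr : H.Reachable x a) (hab : H.Adj a b) :
    H.dist x b ≤ H.dist x a + 1 := by
  obtain ⟨p, hp⟩ := hr.exists_walk_length_eq_dist
  have := dist_le (p.concat hab)
  rw [Walk.length_concat, hp] at this
  exact this

section Pkg

variable [Finite V] {H : SimpleGraph V} {x : V}

private lemma dist_injective (hdeg : ∀ w, (H.neighborSet w).ncard ≤ 2)
    (hx1 : (H.neighborSet x).ncard ≤ 1) :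
    ∀ (k : ℕ) (a b : V), H.Reachable x a → H.Reachable x b →
      H.dist x a = k → H.dist x b = k → a = b := by
  intro k
  induction k with
  | zero =>
    intro a b hra hrb hda hdb
    rw [hra.dist_eq_zero_iff] at hda
    rw [hrb.dist_eq_zero_iff] at hdb
    rw [← hda, ← hdb]
  | succ k ih =>
    intro a b hra hrb hda hdb
    obtain ⟨za, haz, hrza, hdza⟩ := exists_pred hra hda
    obtain ⟨zb, hbz, hrzb, hdzb⟩ := exists_pred hrb hdb
    have hz : za = zb := ih _ _ hrza hrzb hdza hdzb
    subst hz
    rcases Nat.eq_zero_or_pos k with hk0 | hkpos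
    · subst hk0
      have hzx : za = x := (hrza.dist_eq_zero_iff.mp hdza).symm
      subst hzx
      exact mem_of_ncard_le_one hx1 haz ((hbz : H.Adj za b) : b ∈ H.neighborSet za)
    · obtain ⟨k', rfl⟩ : ∃ k', k = k' + 1 := ⟨k - 1, by omega⟩
      obtain ⟨w, hwz, hrw, hdw⟩ := exists_pred hrza hdza
      have hwa : w ≠ a := by
        intro h; subst h; omega
      have hwb : w ≠ b := by
        intro h; subst h; omega
      exact eq_of_ncard_le_two (hdeg za) (hwz.symm : H.Adj za w) haz hbz hwa hwb

private lemma exists_farthest (x : V) :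
    ∃ v, H.Reachable x v ∧ ∀ w, H.Reachable x w → H.dist x w ≤ H.dist x v := by
  classical
  have hfin : ({w | H.Reachable x w}).Finite := Set.toFinite _
  obtain ⟨v, hv, hmax⟩ := Finset.exists_max_image hfin.toFinset (fun w => H.dist x w)
    ⟨x, by rw [Set.Finite.mem_toFinset]; exact Set.mem_setOf.mpr (Reachable.refl x)⟩
  rw [Set.Finite.mem_toFinset] at hv
  exact ⟨v, hv, fun w hw => hmax w (by rwa [Set.Finite.mem_toFinset])⟩

private lemma farthest_nbhd_le_one (hdeg : ∀ w, (H.neighborSet w).ncard ≤ 2)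
    (hx1 : (H.neighborSet x).ncard ≤ 1) {v : V} (hrv : H.Reachable x v)
    (hvx : v ≠ x) (hmax : ∀ w, H.Reachable x w → H.dist x w ≤ H.dist x v) :
    (H.neighborSet v).ncard ≤ 1 := by
  have hvpos : 0 < H.dist x v := hrv.pos_dist_of_ne (Ne.symm hvx)
  apply (Set.ncard_le_one_iff (Set.toFinite _)).mpr
  intro a b (ha : H.Adj v a) (hb : H.Adj v b)
  have key : ∀ z, H.Adj v z → H.dist x z = H.dist x v - 1 := by
    intro z hz
    have hrz : H.Reachable x z := hrv.trans ⟨hz.toWalk⟩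
    have h1 : H.dist x z ≤ H.dist x v := hmax z hrz
    have h2 : H.dist x v ≤ H.dist x z + 1 := dist_adj_le hrz hz.symm
    have h3 : H.dist x z ≠ H.dist x v := by
      intro h
      exact hz.ne (dist_injective hdeg hx1 _ v z hrv hrz rfl h)
    omega
  have hra : H.Reachable x a := hrv.trans ⟨ha.toWalk⟩
  have hrb : H.Reachable x b := hrv.trans ⟨hb.toWalk⟩
  exact dist_injective hdeg hx1 _ a b hra hrb (key a ha) (key b hb)

variable {FS : SimpleGraph V} {y : V}

variable (hHFS : H ≤ FS) (hdeg2 : ∀ w, (FS.neighborSet w).ncard = 2)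
  (hxy : FS.Adj x y)
  (hNx : H.neighborSet x = FS.neighborSet x \ {y})
  (hint : ∀ w, H.Reachable x w → w ≠ x → w ≠ y → H.neighborSet w = FS.neighborSet w)

include hHFS hdeg2 in
private lemma hdeg_H : ∀ w, (H.neighborSet w).ncard ≤ 2 := by
  intro w
  have hsub : H.neighborSet w ⊆ FS.neighborSet w := fun z hz => hHFS hz
  have h1 := Set.ncard_le_ncard hsub (Set.toFinite _)
  have h2 := hdeg2 w
  omega

include hdeg2 hxy hNx in
private lemma hx_one : (H.neighborSet x).ncard = 1 := by
  rw [hNx, Set.ncard_diff_singleton_of_mem (show y ∈ FS.neighborSet x from hxy),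
    hdeg2]

include hHFS hdeg2 hxy hNx hint in
private lemma reach_y : H.Reachable x y := by
  by_contra hnr
  obtain ⟨v, hrv, hmax⟩ := exists_farthest (H := H) x
  have hx1 : (H.neighborSet x).ncard ≤ 1 := le_of_eq (hx_one hdeg2 hxy hNx)
  -- x has an H-neighbor
  obtain ⟨z, hz⟩ := Set.ncard_eq_one.mp (hx_one hdeg2 hxy hNx)
  have hxz : H.Adj x z := by
    have : z ∈ H.neighborSet x := by rw [hz]; exact Set.mem_singleton _
    exact this
  have hdz : H.dist x z = 1 := dist_eq_one_iff_adj.mpr hxz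
  have hvpos : 0 < H.dist x v := by
    have := hmax z ⟨hxz.toWalk⟩
    omega
  have hvx : v ≠ x := by
    intro h; subst h; rw [SimpleGraph.dist_self] at hvpos; omega
  have hvy : v ≠ y := by
    intro h; subst h; exact hnr hrv
  have h2 : (H.neighborSet v).ncard = 2 := by
    rw [hint v hrv hvx hvy]; exact hdeg2 v
  have h1 : (H.neighborSet v).ncard ≤ 1 :=
    farthest_nbhd_le_one (hdeg_H hHFS hdeg2) hx1 hrv hvx hmax
  omega

include hHFS hdeg2 hxy hNx hint in
private lemma dist_le_dist_y : ∀ w, H.Reachable x w → H.dist x w ≤ H.dist x y := by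
  obtain ⟨v, hrv, hmax⟩ := exists_farthest (H := H) x
  have hx1 : (H.neighborSet x).ncard ≤ 1 := le_of_eq (hx_one hdeg2 hxy hNx)
  obtain ⟨z, hz⟩ := Set.ncard_eq_one.mp (hx_one hdeg2 hxy hNx)
  have hxz : H.Adj x z := by
    have : z ∈ H.neighborSet x := by rw [hz]; exact Set.mem_singleton _
    exact this
  have hvpos : 0 < H.dist x v := by
    have := hmax z ⟨hxz.toWalk⟩
    have := dist_eq_one_iff_adj.mpr hxz
    omega
  have hvx : v ≠ x := by
    intro h; subst h; rw [SimpleGraph.dist_self] at hvpos; omega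
  have hvy : v = y := by
    by_contra hvy
    have h2 : (H.neighborSet v).ncard = 2 := by
      rw [hint v hrv hvx hvy]; exact hdeg2 v
    have h1 : (H.neighborSet v).ncard ≤ 1 :=
      farthest_nbhd_le_one (hdeg_H hHFS hdeg2) hx1 hrv hvx hmax
    omega
  subst hvy
  exact hmax

include hHFS hdeg2 hxy hNx hint in
private lemma attained : ∀ k, k ≤ H.dist x y → ∃ w, H.Reachable x w ∧ H.dist x w = k := by
  have key : ∀ j k, k + j = H.dist x y → ∃ w, H.Reachable x w ∧ H.dist x w = k := by
    intro j
    induction j with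
    | zero =>
      intro k hk
      exact ⟨y, reach_y hHFS hdeg2 hxy hNx hint, by omega⟩
    | succ j ih =>
      intro k hk
      obtain ⟨w, hrw, hdw⟩ := ih (k + 1) (by omega)
      obtain ⟨z, _, hrz, hdz⟩ := exists_pred hrw hdw
      exact ⟨z, hrz, hdz⟩
  intro k hk
  exact key (H.dist x y - k) k (by omega)

include hHFS hdeg2 hxy hNx hint in
private lemma ncard_reach : {w | H.Reachable x w}.ncard = H.dist x y + 1 := by
  have hinj : Set.InjOn (fun w => H.dist x w) {w | H.Reachable x w} := by
    intro a ha b hb hab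
    exact dist_injective (hdeg_H hHFS hdeg2) (le_of_eq (hx_one hdeg2 hxy hNx)) _ a b ha hb hab rfl
  have himg : (fun w => H.dist x w) '' {w | H.Reachable x w} = Set.Iic (H.dist x y) := by
    apply Set.eq_of_subset_of_subset
    · rintro k ⟨w, hw, rfl⟩
      exact dist_le_dist_y hHFS hdeg2 hxy hNx hint w hw
    · intro k hk
      obtain ⟨w, hrw, hdw⟩ := attained hHFS hdeg2 hxy hNx hint k hk
      exact ⟨w, hrw, hdw⟩
  rw [← Set.ncard_image_of_injOn hinj, himg, ← Finset.coe_Iic, Set.ncard_coe_finset,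
    Nat.card_Iic]

include hHFS hdeg2 hxy hNx hint in
private lemma y_nbhd_dist : ∀ z, H.Adj y z → H.dist x z = H.dist x y - 1 := by
  intro z hz
  have hry : H.Reachable x y := reach_y hHFS hdeg2 hxy hNx hint
  have hrz : H.Reachable x z := hry.trans ⟨hz.toWalk⟩
  have h1 : H.dist x z ≤ H.dist x y := dist_le_dist_y hHFS hdeg2 hxy hNx hint z hrz
  have h2 : H.dist x y ≤ H.dist x z + 1 := dist_adj_le hrz hz.symm
  have h3 : H.dist x z ≠ H.dist x y := by
    intro h
    exact hz.ne (dist_injective (hdeg_H hHFS hdeg2) (le_of_eq (hx_one hdeg2 hxy hNx))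
      _ z y hrz hry h rfl).symm
  omega

include hHFS hdeg2 hxy hNx in
private lemma adj_dist_or (a b : V) (hra : H.Reachable x a) (hab : H.Adj a b) :
    H.dist x b = H.dist x a + 1 ∨ H.dist x a = H.dist x b + 1 := by
  have hrb : H.Reachable x b := hra.trans ⟨hab.toWalk⟩
  have h1 : H.dist x b ≤ H.dist x a + 1 := dist_adj_le hra hab
  have h2 : H.dist x a ≤ H.dist x b + 1 := dist_adj_le hrb hab.symm
  have h3 : H.dist x a ≠ H.dist x b := by
    intro h
    exact hab.ne (dist_injective (hdeg_H hHFS hdeg2) (le_of_eq (hx_one hdeg2 hxy hNx))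
      _ a b hra hrb rfl h.symm)
  omega

end Pkg

private lemma reach_conv {H FS : SimpleGraph V}
    (hc : ∀ a b, FS.Adj a b → H.Reachable a b) :
    ∀ a b, FS.Reachable a b → H.Reachable a b := by
  intro a b h
  obtain ⟨p⟩ := h
  induction p with
  | nil => exact Reachable.refl _
  | cons h q ih => exact (hc _ _ h).trans ih

private lemma edge_decompG {G : SimpleGraph V} {g : Sym2 V} (hg : g ∈ G.edgeSet) {x : V}
    (hx : x ∈ g) : ∃ b, G.Adj x b ∧ g = s(x, b) := by
  induction g with
  | _ a b =>
    rcases Sym2.mem_iff.mp hx with rfl | rfl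
    · exact ⟨b, hg, rfl⟩
    · exact ⟨a, ((mem_edgeSet G).mp hg).symm, Sym2.eq_swap⟩

private lemma edge_decompF {G : SimpleGraph V} {F : G.Subgraph} {g : Sym2 V}
    (hg : g ∈ F.edgeSet) {x : V} (hx : x ∈ g) : ∃ b, F.Adj x b ∧ g = s(x, b) := by
  induction g with
  | _ a b =>
    rcases Sym2.mem_iff.mp hx with rfl | rfl
    · exact ⟨b, (Subgraph.mem_edgeSet).mp hg, rfl⟩
    · exact ⟨a, ((Subgraph.mem_edgeSet).mp hg).symm, Sym2.eq_swap⟩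

end PackingAux
namespace PackingAux

open SimpleGraph

variable {V : Type*}

private lemma two_le_edist' {W : Type*} {Γ : SimpleGraph W} {a b : W} (hne : a ≠ b)
    (hnadj : ¬ Γ.Adj a b) : (1 : ℕ∞) + 1 ≤ Γ.edist a b := by
  have h0 : Γ.edist a b ≠ 0 := by
    rw [Ne, edist_eq_zero_iff]; exact hne
  have h1 : Γ.edist a b ≠ 1 := by
    rw [Ne, edist_eq_one_iff_adj]; exact hnadj
  have hlt : 1 < Γ.edist a b := lt_of_le_of_ne (Order.one_le_iff_pos.mpr
    (pos_iff_ne_zero.mpr h0)) (Ne.symm h1)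
  exact Order.add_one_le_of_lt hlt

private lemma le_three_of_lt_four {x : ℕ∞} (h : x < 4) : x ≤ 3 := by
  induction x using ENat.recTopCoe with
  | top => exact absurd h (by simp)
  | coe n =>
    have : n < 4 := by exact_mod_cast h
    exact_mod_cast Nat.lt_succ_iff.mp this

open scoped Classical in
private noncomputable def col (e1 e2 : Sym2 V) (Del FE : Set (Sym2 V)) (mind : Sym2 V → ℕ)
    (e : Sym2 V) : Fin 4 :=
  if e = e1 ∨ e = e2 then 3
  else if e ∈ Del then 0
  else if e ∈ FE then (if Even (mind e) then 1 else 0)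
  else 2

section ColChar
variable {e1 e2 : Sym2 V} {Del FE : Set (Sym2 V)} {mind : Sym2 V → ℕ} {e : Sym2 V}

private lemma col_three (h : col e1 e2 Del FE mind e = 3) : e = e1 ∨ e = e2 := by
  by_contra hc
  unfold col at h
  rw [if_neg hc] at h
  split_ifs at h <;> simp_all

private lemma col_two (h : col e1 e2 Del FE mind e = 2) : e ∉ FE ∧ e ∉ Del := by
  unfold col at h
  split_ifs at h <;> simp_all

private lemma col_zero (h : col e1 e2 Del FE mind e = 0) :
    ¬(e = e1 ∨ e = e2) ∧ (e ∈ Del ∨ (e ∉ Del ∧ e ∈ FE ∧ ¬ Even (mind e))) := by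
  unfold col at h
  split_ifs at h <;> simp_all

private lemma col_one (h : col e1 e2 Del FE mind e = 1) :
    e ∉ Del ∧ e ∈ FE ∧ Even (mind e) := by
  unfold col at h
  split_ifs at h <;> simp_all

end ColChar

end PackingAux
namespace PackingAux

open SimpleGraph

private lemma edge_decompF' {V : Type*} {G : SimpleGraph V} {F : G.Subgraph} {g : Sym2 V}
    (hg : g ∈ F.edgeSet) : ∃ a b, F.Adj a b ∧ g = s(a, b) := by
  induction g with
  | _ a b => exact ⟨a, b, Subgraph.mem_edgeSet.mp hg, rfl⟩

private lemma edist_step {W : Type*} {Γ : SimpleGraph W} {a b : W} {n : ℕ}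
    (h : Γ.edist a b ≤ n + 1) (hne : a ≠ b) : ∃ c, Γ.Adj a c ∧ Γ.edist c b ≤ n := by
  have hntop : Γ.edist a b ≠ ⊤ := by
    intro ht; rw [ht, top_le_iff] at h
    exact (ENat.coe_ne_top _) h
  obtain ⟨p, hp⟩ := exists_walk_of_edist_ne_top hntop
  have hlen : p.length ≤ n + 1 := by
    have : (p.length : ℕ∞) ≤ n + 1 := by rw [hp]; exact_mod_cast h
    exact_mod_cast this
  cases p with
  | nil => exact absurd rfl hne
  | @cons _ c _ hadj q =>
    refine ⟨c, hadj, ?_⟩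
    have hq : q.length ≤ n := by
      simp only [Walk.length_cons] at hlen; omega
    calc Γ.edist c b ≤ q.length := edist_le q
      _ ≤ (n : ℕ∞) := by exact_mod_cast hq

private lemma main_one {V : Type*} [Fintype V] (G : SimpleGraph V)
    (hcubic : IsCubicGraph G)
    (F : G.Subgraph) (hF : IsTwoFactor F)
    (C1 C2 : F.spanningCoe.ConnectedComponent) (hne : C1 ≠ C2)
    (hodd : oddCycles F = {C1, C2})
    (hlen1 : 13 ≤ C1.supp.ncard) :
    HasPackingEdgeColoring G [1, 1, 1, 3] := by
  classical
  have hdeg2 : ∀ w, (F.spanningCoe.neighborSet w).ncard = 2 := fun w => hF.2 w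
  have hadj_comp : ∀ a b : V, F.Adj a b →
      F.spanningCoe.connectedComponentMk a = F.spanningCoe.connectedComponentMk b :=
    fun a b h => ConnectedComponent.sound ⟨(show F.spanningCoe.Adj a b from h).toWalk⟩
  have hC1C2 : ∀ w : V, w ∈ C1.supp → w ∈ C2.supp → False := by
    intro w h1 h2
    rw [ConnectedComponent.mem_supp_iff] at h1 h2
    exact hne (h1 ▸ h2 ▸ rfl)
  -- the perfect matching function m
  have hmex : ∀ w : V, ∃ z, G.Adj w z ∧ ¬ F.Adj w z ∧ ∀ t, G.Adj w t → ¬ F.Adj w t → t = z := by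
    intro w
    have hsub : F.neighborSet w ⊆ G.neighborSet w := fun z hz => F.adj_sub hz
    have hd : (G.neighborSet w \ F.neighborSet w).ncard = 1 := by
      rw [Set.ncard_diff hsub (Set.toFinite _), hcubic w, hF.2 w]
    obtain ⟨z, hz⟩ := Set.ncard_eq_one.mp hd
    have hzmem : z ∈ G.neighborSet w \ F.neighborSet w := by
      rw [hz]; exact Set.mem_singleton _
    refine ⟨z, hzmem.1, hzmem.2, fun t ht hft => ?_⟩
    have hmem : t ∈ G.neighborSet w \ F.neighborSet w := ⟨ht, hft⟩
    rw [hz] at hmem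
    exact hmem
  choose m hm1 hm2 hm3 using hmex
  have hminv : ∀ w, m (m w) = w := fun w =>
    (hm3 (m w) w (hm1 w).symm (fun h => hm2 w h.symm)).symm
  -- "other neighbor" helper
  have hother : ∀ w z, F.Adj w z →
      ∃ z', F.Adj w z' ∧ z' ≠ z ∧ ∀ t, F.Adj w t → t = z ∨ t = z' := by
    intro w z hz
    obtain ⟨a, b, hab, hN⟩ := Set.ncard_eq_two.mp (hF.2 w)
    have hmem : ∀ t, F.Adj w t ↔ t = a ∨ t = b := by
      intro t
      constructor
      · intro ht
        have h' : t ∈ F.neighborSet w := ht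
        rw [hN] at h'
        simpa using h'
      · intro ht
        have h' : t ∈ F.neighborSet w := by rw [hN]; simpa using ht
        exact h'
    rcases (hmem z).mp hz with rfl | rfl
    · exact ⟨b, (hmem b).mpr (Or.inr rfl), Ne.symm hab, fun t ht => (hmem t).mp ht⟩
    · exact ⟨a, (hmem a).mpr (Or.inl rfl), hab, fun t ht => ((hmem t).mp ht).symm⟩
  -- base vertex and edge e2 = s(u,v) on C2
  obtain ⟨u, hu0⟩ := Quot.exists_rep C2
  have hu : F.spanningCoe.connectedComponentMk u = C2 := hu0
  obtain ⟨v, hv⟩ : ∃ z, F.Adj u z := by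
    obtain ⟨z, hz⟩ := Set.nonempty_of_ncard_ne_zero
      (s := F.neighborSet u) (by rw [hF.2 u]; omega)
    exact ⟨z, hz⟩
  have hvC2 : F.spanningCoe.connectedComponentMk v = C2 := (hadj_comp u v hv).symm.trans hu
  have he2F : s(u, v) ∈ F.edgeSet := Subgraph.mem_edgeSet.mpr hv
  have he2G : s(u, v) ∈ G.edgeSet := F.edgeSet_subset he2F
  obtain ⟨u', hu'1, hu'2, hu'3⟩ := hother u v hv
  obtain ⟨v', hv'1, hv'2, hv'3⟩ := hother v u hv.symm
  -- neighbors of m u, m v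
  obtain ⟨p, q, hpqne, hNmu⟩ := Set.ncard_eq_two.mp (hF.2 (m u))
  obtain ⟨p2, q2, hpq2ne, hNmv⟩ := Set.ncard_eq_two.mp (hF.2 (m v))
  have hmup : F.Adj (m u) p := by
    have : p ∈ F.neighborSet (m u) := by rw [hNmu]; exact Set.mem_insert _ _
    exact this
  have hmuq : F.Adj (m u) q := by
    have : q ∈ F.neighborSet (m u) := by rw [hNmu]; simp
    exact this
  have hmvp2 : F.Adj (m v) p2 := by
    have : p2 ∈ F.neighborSet (m v) := by rw [hNmv]; exact Set.mem_insert _ _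
    exact this
  have hmvq2 : F.Adj (m v) q2 := by
    have : q2 ∈ F.neighborSet (m v) := by rw [hNmv]; simp
    exact this
  have hNmu' : ∀ t, F.Adj (m u) t → t = p ∨ t = q := by
    intro t ht
    have h' : t ∈ F.neighborSet (m u) := ht
    rw [hNmu] at h'
    simpa using h'
  have hNmv' : ∀ t, F.Adj (m v) t → t = p2 ∨ t = q2 := by
    intro t ht
    have h' : t ∈ F.neighborSet (m v) := ht
    rw [hNmv] at h'
    simpa using h'
  obtain ⟨p', hp'1, hp'2, hp'3⟩ := hother p (m u) hmup.symm
  obtain ⟨q', hq'1, hq'2, hq'3⟩ := hother q (m u) hmuq.symm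
  obtain ⟨p2', hp2'1, hp2'2, hp2'3⟩ := hother p2 (m v) hmvp2.symm
  obtain ⟨q2', hq2'1, hq2'2, hq2'3⟩ := hother q2 (m v) hmvq2.symm
  obtain ⟨r1, r2, hr12ne, hNmu2⟩ := Set.ncard_eq_two.mp (hF.2 (m u'))
  obtain ⟨r3, r4, hr34ne, hNmv2⟩ := Set.ncard_eq_two.mp (hF.2 (m v'))
  have hNmu2' : ∀ t, F.Adj (m u') t → t = r1 ∨ t = r2 := by
    intro t ht
    have h' : t ∈ F.neighborSet (m u') := ht
    rw [hNmu2] at h'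
    simpa using h'
  have hNmv2' : ∀ t, F.Adj (m v') t → t = r3 ∨ t = r4 := by
    intro t ht
    have h' : t ∈ F.neighborSet (m v') := ht
    rw [hNmv2] at h'
    simpa using h'
  -- the excluded edge set X
  set XL : List (Sym2 V) := [s(m u, p), s(m u, q), s(p, p'), s(q, q'),
    s(m v, p2), s(m v, q2), s(p2, p2'), s(q2, q2'),
    s(m u', r1), s(m u', r2), s(m v', r3), s(m v', r4)] with hXL
  set X : Finset (Sym2 V) := XL.toFinset with hXdef
  have hX12 : X.card ≤ 12 := le_trans (List.toFinset_card_le XL) (by rw [hXL]; simp)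
  -- coverage of X
  have hcov : ∀ g, g ∈ F.edgeSet → ∀ w, w ∈ g →
      (w = m u ∨ w = m v ∨ w = m u' ∨ w = m v' ∨ F.Adj (m u) w ∨ F.Adj (m v) w) →
      g ∈ X := by
    intro g hg w hwg hW
    obtain ⟨z, hwz, rfl⟩ := edge_decompF hg hwg
    rw [hXdef, List.mem_toFinset, hXL]
    rcases hW with rfl | rfl | rfl | rfl | hW | hW
    · rcases hNmu' z hwz with rfl | rfl <;> simp
    · rcases hNmv' z hwz with rfl | rfl <;> simp
    · rcases hNmu2' z hwz with rfl | rfl <;> simp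
    · rcases hNmv2' z hwz with rfl | rfl <;> simp
    · rcases hNmu' w hW with rfl | rfl
      · rcases hp'3 z hwz with rfl | rfl
        · rw [Sym2.eq_swap]; simp
        · simp
      · rcases hq'3 z hwz with rfl | rfl
        · rw [Sym2.eq_swap]; simp
        · simp
    · rcases hNmv' w hW with rfl | rfl
      · rcases hp2'3 z hwz with rfl | rfl
        · rw [Sym2.eq_swap]; simp
        · simp
      · rcases hq2'3 z hwz with rfl | rfl
        · rw [Sym2.eq_swap]; simp
        · simp
  -- crossing lemma
  have hcross : ∀ a b : V, F.spanningCoe.connectedComponentMk a = C2 → b ∈ C1.supp →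
      G.Adj a b → b = m a := by
    intro a b ha hb hab
    apply hm3 a b hab
    intro hFab
    exact hC1C2 b hb (by
      rw [ConnectedComponent.mem_supp_iff, ← hadj_comp a b hFab]
      exact ha)
  -- the "bad edges are in X" lemma
  have hbad : ∀ (g : Sym2 V), g ∈ cycleEdges F C1 → ∀ (hgG : g ∈ G.edgeSet),
      G.lineGraph.edist ⟨s(u,v), he2G⟩ ⟨g, hgG⟩ ≤ 3 → g ∈ X := by
    intro g hgc hgG hdist
    obtain ⟨hgF, hgsupp⟩ := hgc
    have huv_supp : ∀ x : V, x ∈ (s(u,v) : Sym2 V) →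
        F.spanningCoe.connectedComponentMk x = C2 := by
      intro x hx
      rcases Sym2.mem_iff.mp hx with rfl | rfl
      exacts [hu, hvC2]
    have hgne2 : ∀ x : V, x ∈ g → x ∈ (s(u,v) : Sym2 V) → False := by
      intro x hxg hxe
      exact hC1C2 x (hgsupp x hxg) ((ConnectedComponent.mem_supp_iff _ _).mpr (huv_supp x hxe))
    have hEne : (⟨s(u,v), he2G⟩ : G.edgeSet) ≠ ⟨g, hgG⟩ := by
      intro h
      have : s(u,v) = g := congrArg Subtype.val h
      exact hgne2 u (this ▸ Sym2.mem_mk_left u v) (Sym2.mem_mk_left u v)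
    -- key finishing step from a crossing adjacency
    have hfinish : ∀ x y : V, x ∈ (s(u,v) : Sym2 V) → y ∈ g → G.Adj x y → g ∈ X := by
      intro x y hx hy hxy
      have hym : y = m x := hcross x y (huv_supp x hx) (hgsupp y hy) hxy
      apply hcov g hgF y hy
      rcases Sym2.mem_iff.mp hx with rfl | rfl
      · exact Or.inl hym
      · exact Or.inr (Or.inl hym)
    -- extract up to three steps
    obtain ⟨g1, ha1, hd1⟩ := edist_step (n := 2) (by exact_mod_cast hdist) hEne
    by_cases hg1f : g1 = ⟨g, hgG⟩
    · -- distance ≤ 1 : adjacency between e2 and g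
      rw [hg1f] at ha1
      obtain ⟨-, x, hxe, hxg⟩ := lineGraph_adj_iff_exists.mp ha1
      exact absurd (hgne2 x hxg hxe) (by simp)
    · obtain ⟨g2, ha2, hd2⟩ := edist_step (n := 1) (by exact_mod_cast hd1) hg1f
      obtain ⟨-, x, hxe, hxg1⟩ := lineGraph_adj_iff_exists.mp ha1
      obtain ⟨b, hxb, hg1eq⟩ := edge_decompG g1.2 hxg1
      by_cases hg2f : g2 = ⟨g, hgG⟩
      · -- chain of length 2 : e2 ~ g1 ~ g
        rw [hg2f] at ha2
        obtain ⟨-, y, hyg1, hyg⟩ := lineGraph_adj_iff_exists.mp ha2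
        have hyx : y ≠ x := fun h => hgne2 y hyg (h ▸ hxe)
        have hyb : y = b := by
          rw [hg1eq] at hyg1
          rcases Sym2.mem_iff.mp hyg1 with h | h
          · exact absurd h hyx
          · exact h
        exact hfinish x b hxe (hyb ▸ hyg) hxb
      · -- chain of length 3 : e2 ~ g1 ~ g2 ~ g
        have hd2' : G.lineGraph.edist g2 ⟨g, hgG⟩ = 1 := by
          have hpos : G.lineGraph.edist g2 ⟨g, hgG⟩ ≠ 0 := by
            rw [Ne, edist_eq_zero_iff]; exact hg2f
          have h1 : 1 ≤ G.lineGraph.edist g2 ⟨g, hgG⟩ :=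
            Order.one_le_iff_pos.mpr (pos_iff_ne_zero.mpr hpos)
          exact le_antisymm (by exact_mod_cast hd2) h1
        have ha3 : G.lineGraph.Adj g2 ⟨g, hgG⟩ := edist_eq_one_iff_adj.mp hd2'
        obtain ⟨-, t, htg1, htg2⟩ := lineGraph_adj_iff_exists.mp ha2
        obtain ⟨-, y, hyg2, hyg⟩ := lineGraph_adj_iff_exists.mp ha3
        obtain ⟨z2, htz2, hg2eq⟩ := edge_decompG g2.2 htg2
        have htxb : t = x ∨ t = b := by
          rw [hg1eq] at htg1
          exact Sym2.mem_iff.mp htg1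
        have hyy : y = t ∨ y = z2 := by
          rw [hg2eq] at hyg2
          exact Sym2.mem_iff.mp hyg2
        rcases hyy with hyt | hyz
        · rcases htxb with htx | htb
          · exact absurd (hgne2 y hyg ((htx ▸ hyt) ▸ hxe)) (by simp)
          · exact hfinish x y hxe hyg (by rw [hyt, htb]; exact hxb)
        · have htz : G.Adj t y := by rw [hyz]; exact htz2
          rcases htxb with htx | htb
          · exact hfinish t y (by rw [htx]; exact hxe) hyg htz
          · have hxbadj : G.Adj x t := by rw [htb]; exact hxb
            by_cases hFxb : F.Adj x t
            · have hbC2 : F.spanningCoe.connectedComponentMk t = C2 :=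
                (hadj_comp x t hFxb).symm.trans (huv_supp x hxe)
              have hym : y = m t := hcross t y hbC2 (hgsupp y hyg) htz
              apply hcov g hgF y hyg
              rcases Sym2.mem_iff.mp hxe with rfl | rfl
              · rcases hu'3 t hFxb with htv | htu'
                · exact Or.inr (Or.inl (by rw [hym, htv]))
                · exact Or.inr (Or.inr (Or.inl (by rw [hym, htu'])))
              · rcases hv'3 t hFxb with htu | htv'
                · exact Or.inl (by rw [hym, htu])
                · exact Or.inr (Or.inr (Or.inr (Or.inl (by rw [hym, htv']))))
            · have hbm : t = m x := hm3 x t hxbadj hFxb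
              by_cases hFby : F.Adj t y
              · apply hcov g hgF y hyg
                rcases Sym2.mem_iff.mp hxe with rfl | rfl
                · exact Or.inr (Or.inr (Or.inr (Or.inr (Or.inl (by rw [← hbm]; exact hFby)))))
                · exact Or.inr (Or.inr (Or.inr (Or.inr (Or.inr (by rw [← hbm]; exact hFby)))))
              · have hz2m : y = m t := hm3 t y htz hFby
                rw [hbm, hminv] at hz2m
                exact absurd (hgne2 y hyg (hz2m ▸ hxe)) (by simp)
  -- ############ selection of e1 on C1 ############
  obtain ⟨w1, hw10⟩ := Quot.exists_rep C1
  have hw1C : F.spanningCoe.connectedComponentMk w1 = C1 := hw10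
  obtain ⟨z1, hz1⟩ : ∃ z, F.Adj w1 z := by
    obtain ⟨z, hz⟩ := Set.nonempty_of_ncard_ne_zero
      (s := F.neighborSet w1) (by rw [hF.2 w1]; omega)
    exact ⟨z, hz⟩
  have hz1C : F.spanningCoe.connectedComponentMk z1 = C1 := (hadj_comp w1 z1 hz1).symm.trans hw1C
  set H0 : SimpleGraph V := F.spanningCoe.deleteEdges {s(w1, z1)} with hH0
  have hH0le : H0 ≤ F.spanningCoe := SimpleGraph.deleteEdges_le _
  have hFSwz : F.spanningCoe.Adj w1 z1 := hz1
  have hNx0 : H0.neighborSet w1 = F.spanningCoe.neighborSet w1 \ {z1} := by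
    ext z
    simp only [mem_neighborSet, hH0, SimpleGraph.deleteEdges_adj, Set.mem_diff,
      Set.mem_singleton_iff]
    constructor
    · rintro ⟨ha, hnd⟩
      exact ⟨ha, fun h => hnd (by rw [h])⟩
    · rintro ⟨ha, hnz⟩
      exact ⟨ha, fun h => hnz (Sym2.congr_right.mp h)⟩
  have hint0 : ∀ w, H0.Reachable w1 w → w ≠ w1 → w ≠ z1 →
      H0.neighborSet w = F.spanningCoe.neighborSet w := by
    intro w _ hww1 hwz1
    ext z
    simp only [mem_neighborSet, hH0, SimpleGraph.deleteEdges_adj, Set.mem_singleton_iff]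
    constructor
    · exact fun h => h.1
    · intro h
      refine ⟨h, fun hEq => ?_⟩
      have hwmem : w ∈ s(w1, z1) := by rw [← hEq]; exact Sym2.mem_mk_left w z
      rcases Sym2.mem_iff.mp hwmem with h' | h'
      exacts [hww1 h', hwz1 h']
  have hry0 : H0.Reachable w1 z1 := reach_y hH0le hdeg2 hFSwz hNx0 hint0
  have hc0 : ∀ a b, F.spanningCoe.Adj a b → H0.Reachable a b := by
    intro a b hab
    by_cases hd : s(a, b) = s(w1, z1)
    · rcases Sym2.eq_iff.mp hd with ⟨rfl, rfl⟩ | ⟨rfl, rfl⟩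
      · exact hry0
      · exact hry0.symm
    · exact ⟨(SimpleGraph.deleteEdges_adj.mpr ⟨hab, by simpa using hd⟩ :
        H0.Adj a b).toWalk⟩
  have hS0 : {w | H0.Reachable w1 w} = C1.supp := by
    ext w
    simp only [Set.mem_setOf_eq, ConnectedComponent.mem_supp_iff]
    constructor
    · intro hw
      rw [← hw1C]
      exact (ConnectedComponent.sound ((Reachable.mono hH0le hw))).symm
    · intro hw
      exact reach_conv hc0 w1 w (ConnectedComponent.exact (by rw [hw, hw1C]))
  have ht0 : 12 ≤ H0.dist w1 z1 := by
    have hn := ncard_reach hH0le hdeg2 hFSwz hNx0 hint0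
    rw [hS0] at hn
    omega
  have hwse : ∀ k : ℕ, ∃ w, k ≤ 12 → H0.Reachable w1 w ∧ H0.dist w1 w = k := by
    intro k
    by_cases hk : k ≤ 12
    · obtain ⟨w, hw1, hw2⟩ := attained hH0le hdeg2 hFSwz hNx0 hint0 k (le_trans hk ht0)
      exact ⟨w, fun _ => ⟨hw1, hw2⟩⟩
    · exact ⟨w1, fun h => absurd h hk⟩
  choose ws hws using hwse
  have hdegH0 := hdeg_H hH0le hdeg2
  have hx10 : (H0.neighborSet w1).ncard ≤ 1 := le_of_eq (hx_one hdeg2 hFSwz hNx0)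
  have hws_adj : ∀ k, k < 12 → H0.Adj (ws k) (ws (k + 1)) := by
    intro k hk
    obtain ⟨z, hz, hrz, hdz⟩ := exists_pred (hws (k + 1) (by omega)).1 (hws (k + 1) (by omega)).2
    have hzw : z = ws k := dist_injective hdegH0 hx10 k z (ws k) hrz
      (hws k (by omega)).1 hdz (hws k (by omega)).2
    rw [← hzw]
    exact hz
  have hws_inj : ∀ j k, j ≤ 12 → k ≤ 12 → ws j = ws k → j = k := by
    intro j k hj hk hjk
    have h1 := (hws j hj).2
    have h2 := (hws k hk).2
    rw [hjk] at h1
    omega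
  set SE : Finset (Sym2 V) :=
    insert (s(w1, z1)) ((Finset.range 12).image fun k => s(ws k, ws (k + 1))) with hSE
  have hSEcard : 13 ≤ SE.card := by
    have hinj : Set.InjOn (fun k => s(ws k, ws (k + 1))) ↑(Finset.range 12) := by
      intro a ha b hb hab
      rw [Finset.mem_coe, Finset.mem_range] at ha hb
      rcases Sym2.eq_iff.mp hab with ⟨h1, h2⟩ | ⟨h1, h2⟩
      · exact hws_inj a b (by omega) (by omega) h1
      · have e1 := hws_inj a (b + 1) (by omega) (by omega) h1
        have e2 := hws_inj (a + 1) b (by omega) (by omega) h2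
        omega
    have hnm : s(w1, z1) ∉ (Finset.range 12).image fun k => s(ws k, ws (k + 1)) := by
      intro hmem
      obtain ⟨k, hk, hkeq⟩ := Finset.mem_image.mp hmem
      rw [Finset.mem_range] at hk
      have hadj := hws_adj k hk
      rw [hH0] at hadj
      exact (SimpleGraph.deleteEdges_adj.mp hadj).2 (by rw [hkeq]; exact rfl)
    rw [hSE, Finset.card_insert_of_notMem hnm, Finset.card_image_of_injOn hinj,
      Finset.card_range]
  obtain ⟨e1, he1SE, he1X⟩ : ∃ e1 ∈ SE, e1 ∉ X := by
    by_contra hcon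
    push_neg at hcon
    have hsub : SE ⊆ X := fun g hg => hcon g hg
    have := Finset.card_le_card hsub
    omega
  have he1cyc : e1 ∈ cycleEdges F C1 := by
    have hmk : ∀ a b : V, F.Adj a b → F.spanningCoe.connectedComponentMk a = C1 →
        s(a, b) ∈ cycleEdges F C1 := by
      intro a b hab ha
      refine ⟨Subgraph.mem_edgeSet.mpr hab, fun w hw => ?_⟩
      rw [ConnectedComponent.mem_supp_iff]
      rcases Sym2.mem_iff.mp hw with h' | h'
      · rw [h']; exact ha
      · rw [h']; exact (hadj_comp a b hab).symm.trans ha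
    rw [hSE] at he1SE
    rcases Finset.mem_insert.mp he1SE with h | h
    · rw [h]; exact hmk w1 z1 hz1 hw1C
    · obtain ⟨k, hk, hkeq⟩ := Finset.mem_image.mp h
      rw [Finset.mem_range] at hk
      have hadj : F.Adj (ws k) (ws (k + 1)) := hH0le (hws_adj k hk)
      have hwsC : F.spanningCoe.connectedComponentMk (ws k) = C1 := by
        have hr : ws k ∈ {w | H0.Reachable w1 w} := (hws k (by omega)).1
        rw [hS0] at hr
        exact (ConnectedComponent.mem_supp_iff _ _).mp hr
      rw [← hkeq]
      exact hmk (ws k) (ws (k + 1)) hadj hwsC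
  have he1F : e1 ∈ F.edgeSet := he1cyc.1
  have he1G : e1 ∈ G.edgeSet := F.edgeSet_subset he1F
  have hfar : 4 ≤ G.lineGraph.edist ⟨s(u,v), he2G⟩ ⟨e1, he1G⟩ := by
    by_contra hlt
    exact he1X (hbad e1 he1cyc he1G (le_three_of_lt_four (not_le.mp hlt)))
  -- ############ deleted edge in every component ############
  have hsel : ∀ c : F.spanningCoe.ConnectedComponent,
      ∃ x y : V, F.Adj x y ∧ F.spanningCoe.connectedComponentMk x = c ∧
        (c = C1 → s(x, y) = e1) ∧ (c = C2 → s(x, y) = s(u, v)) := by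
    intro c
    by_cases hc1 : c = C1
    · rw [hc1]
      obtain ⟨a1, b1, ha1b1, he1eq⟩ := edge_decompF' he1F
      have ha1C : F.spanningCoe.connectedComponentMk a1 = C1 := by
        have hm' := he1cyc.2 a1 (by rw [he1eq]; exact Sym2.mem_mk_left a1 b1)
        exact (ConnectedComponent.mem_supp_iff _ _).mp hm'
      exact ⟨a1, b1, ha1b1, ha1C, fun _ => he1eq.symm, fun h => absurd h hne⟩
    · by_cases hc2 : c = C2
      · rw [hc2]
        exact ⟨u, v, hv, hu, fun h => absurd h (Ne.symm hne), fun _ => rfl⟩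
      · obtain ⟨wc, hwc0⟩ := Quot.exists_rep c
        have hwc : F.spanningCoe.connectedComponentMk wc = c := hwc0
        obtain ⟨zc, hzc⟩ : ∃ z, F.Adj wc z := by
          obtain ⟨z, hz⟩ := Set.nonempty_of_ncard_ne_zero
            (s := F.neighborSet wc) (by rw [hF.2 wc]; omega)
          exact ⟨z, hz⟩
        exact ⟨wc, zc, hzc, hwc, fun h => absurd h hc1, fun h => absurd h hc2⟩
  choose xr yr hxr1 hxr2 hxr3 hxr4 using hsel
  have hyr2 : ∀ c, F.spanningCoe.connectedComponentMk (yr c) = c :=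
    fun c => (hadj_comp (xr c) (yr c) (hxr1 c)).symm.trans (hxr2 c)
  set Del : Set (Sym2 V) := Set.range (fun c => s(xr c, yr c)) with hDel
  set H : SimpleGraph V := F.spanningCoe.deleteEdges Del with hHdef
  have hHle : H ≤ F.spanningCoe := SimpleGraph.deleteEdges_le _
  have hDel_comp : ∀ (c' : F.spanningCoe.ConnectedComponent) (w : V),
      w ∈ s(xr c', yr c') → c' = F.spanningCoe.connectedComponentMk w := by
    intro c' w hwg
    rcases Sym2.mem_iff.mp hwg with h' | h'
    · rw [h']; exact (hxr2 c').symm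
    · rw [h']; exact (hyr2 c').symm
  have hNxH : ∀ c, H.neighborSet (xr c) = F.spanningCoe.neighborSet (xr c) \ {yr c} := by
    intro c
    ext z
    simp only [mem_neighborSet, hHdef, SimpleGraph.deleteEdges_adj, Set.mem_diff,
      Set.mem_singleton_iff]
    constructor
    · rintro ⟨ha, hnd⟩
      refine ⟨ha, fun h => hnd ?_⟩
      rw [h, hDel]
      exact ⟨c, rfl⟩
    · rintro ⟨ha, hnz⟩
      refine ⟨ha, fun hmem => ?_⟩
      obtain ⟨c', hc'0⟩ := hmem
      have hc' : s(xr c', yr c') = s(xr c, z) := hc'0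
      have hceq : c' = c := by
        have h1 := hDel_comp c' (xr c) (by rw [hc']; exact Sym2.mem_mk_left _ _)
        rw [h1, hxr2]
      rw [hceq] at hc'
      exact hnz (Sym2.congr_right.mp hc').symm
  have hintH : ∀ c w, H.Reachable (xr c) w → w ≠ xr c → w ≠ yr c →
      H.neighborSet w = F.spanningCoe.neighborSet w := by
    intro c w hrw hwx hwy
    have hwc : F.spanningCoe.connectedComponentMk w = c := by
      rw [← hxr2 c]
      exact (ConnectedComponent.sound (Reachable.mono hHle hrw)).symm
    ext z
    simp only [mem_neighborSet, hHdef, SimpleGraph.deleteEdges_adj]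
    constructor
    · exact fun h => h.1
    · intro h
      refine ⟨h, fun hmem => ?_⟩
      obtain ⟨c', hc'0⟩ := hmem
      have hc' : s(xr c', yr c') = s(w, z) := hc'0
      have hwmem : w ∈ s(xr c', yr c') := by rw [hc']; exact Sym2.mem_mk_left _ _
      have hceq : c' = c := (hDel_comp c' w hwmem).trans hwc
      rw [hceq] at hwmem
      rcases Sym2.mem_iff.mp hwmem with h' | h'
      exacts [hwx h', hwy h']
  have hreach_y : ∀ c, H.Reachable (xr c) (yr c) :=
    fun c => reach_y hHle hdeg2 (hxr1 c) (hNxH c) (hintH c)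
  have hcH : ∀ a b, F.spanningCoe.Adj a b → H.Reachable a b := by
    intro a b hab
    by_cases hd : s(a, b) ∈ Del
    · obtain ⟨c', hc'0⟩ := hd
      have hc' : s(xr c', yr c') = s(a, b) := hc'0
      rcases Sym2.eq_iff.mp hc' with ⟨h1, h2⟩ | ⟨h1, h2⟩
      · rw [← h1, ← h2]; exact hreach_y c'
      · rw [← h1, ← h2]; exact (hreach_y c').symm
    · exact ⟨(SimpleGraph.deleteEdges_adj.mpr ⟨hab, hd⟩ : H.Adj a b).toWalk⟩
  have hreachAll : ∀ w, H.Reachable (xr (F.spanningCoe.connectedComponentMk w)) w := by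
    intro w
    apply reach_conv hcH
    exact ConnectedComponent.exact (by rw [hxr2])
  have hScH : ∀ c, {w | H.Reachable (xr c) w} = c.supp := by
    intro c
    ext w
    simp only [Set.mem_setOf_eq, ConnectedComponent.mem_supp_iff]
    constructor
    · intro hw
      rw [← hxr2 c]
      exact (ConnectedComponent.sound (Reachable.mono hHle hw)).symm
    · intro hw
      apply reach_conv hcH
      exact ConnectedComponent.exact (by rw [hw, hxr2])
  set mind : Sym2 V → ℕ := Sym2.lift ⟨fun a b =>
      min (H.dist (xr (F.spanningCoe.connectedComponentMk a)) a)
          (H.dist (xr (F.spanningCoe.connectedComponentMk b)) b),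
    fun a b => min_comm _ _⟩ with hmind
  have hmind_eval : ∀ a b : V, mind s(a, b) =
      min (H.dist (xr (F.spanningCoe.connectedComponentMk a)) a)
          (H.dist (xr (F.spanningCoe.connectedComponentMk b)) b) := by
    intro a b
    rw [hmind, Sym2.lift_mk]
  -- parity argument for two F-edges of H sharing a vertex
  have hHH : ∀ g g' : Sym2 V, g ≠ g' → g ∈ F.edgeSet → g ∉ Del → g' ∈ F.edgeSet → g' ∉ Del →
      (Even (mind g) ↔ Even (mind g')) → ∀ w, w ∈ g → w ∈ g' → False := by
    intro g g' hgg' hgF hgD hg'F hg'D hpar w hwg hwg'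
    obtain ⟨a, hwa, hgeq⟩ := edge_decompF hgF hwg
    obtain ⟨b, hwb, hg'eq⟩ := edge_decompF hg'F hwg'
    have hab : a ≠ b := fun h => hgg' (by rw [hgeq, hg'eq, h])
    have hHa : H.Adj w a := by
      rw [hHdef]
      exact SimpleGraph.deleteEdges_adj.mpr ⟨hwa, by rw [← hgeq]; exact hgD⟩
    have hHb : H.Adj w b := by
      rw [hHdef]
      exact SimpleGraph.deleteEdges_adj.mpr ⟨hwb, by rw [← hg'eq]; exact hg'D⟩
    set c := F.spanningCoe.connectedComponentMk w with hc
    have hca : F.spanningCoe.connectedComponentMk a = c := (hadj_comp w a hwa).symm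
    have hcb : F.spanningCoe.connectedComponentMk b = c := (hadj_comp w b hwb).symm
    have hrw : H.Reachable (xr c) w := by
      have h' := hreachAll w
      rwa [← hc] at h'
    have hra : H.Reachable (xr c) a := by
      have h' := hreachAll a
      rwa [hca] at h'
    have hrb : H.Reachable (xr c) b := by
      have h' := hreachAll b
      rwa [hcb] at h'
    have hdegH := hdeg_H hHle hdeg2
    have hx1c : (H.neighborSet (xr c)).ncard ≤ 1 := le_of_eq (hx_one hdeg2 (hxr1 c) (hNxH c))
    have hdab : H.dist (xr c) a ≠ H.dist (xr c) b := fun hEq =>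
      hab (dist_injective hdegH hx1c _ a b hra hrb rfl hEq.symm)
    have hoa := adj_dist_or hHle hdeg2 (hxr1 c) (hNxH c) w a hrw hHa
    have hob := adj_dist_or hHle hdeg2 (hxr1 c) (hNxH c) w b hrw hHb
    have hmg : mind g = min (H.dist (xr c) w) (H.dist (xr c) a) := by
      rw [hgeq, hmind_eval, ← hc, hca]
    have hmg' : mind g' = min (H.dist (xr c) w) (H.dist (xr c) b) := by
      rw [hg'eq, hmind_eval, ← hc, hcb]
    rw [hmg, hmg'] at hpar
    rw [Nat.even_iff, Nat.even_iff] at hpar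
    rcases hoa with h1 | h1 <;> rcases hob with h2 | h2 <;> omega
  -- deleted edge of an even cycle vs an adjacent H-edge
  have hDelH : ∀ g g' : Sym2 V, g ∈ Del → ¬(g = e1 ∨ g = s(u, v)) → g' ∈ F.edgeSet →
      g' ∉ Del → ¬ Even (mind g') → ∀ w, w ∈ g → w ∈ g' → False := by
    intro g g' hgD hgnot hg'F hg'D hg'par w hwg hwg'
    obtain ⟨c0, hc00⟩ := hgD
    have hgc0 : g = s(xr c0, yr c0) := hc00.symm
    have hc0C1 : c0 ≠ C1 := fun h => hgnot (Or.inl (by rw [hgc0, h]; exact hxr3 C1 rfl))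
    have hc0C2 : c0 ≠ C2 := fun h => hgnot (Or.inr (by rw [hgc0, h]; exact hxr4 C2 rfl))
    have hodd0 : ¬ Odd c0.supp.ncard := by
      intro ho
      have hmem : c0 ∈ oddCycles F := ho
      rw [hodd] at hmem
      rcases hmem with h | h
      exacts [hc0C1 h, hc0C2 h]
    have heven : Even c0.supp.ncard := Nat.not_odd_iff_even.mp hodd0
    have hnc := ncard_reach hHle hdeg2 (hxr1 c0) (hNxH c0) (hintH c0)
    rw [hScH c0] at hnc
    have htne : H.dist (xr c0) (yr c0) ≠ 0 := by
      intro h0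
      exact (Subgraph.Adj.ne (hxr1 c0)) ((hreach_y c0).dist_eq_zero_iff.mp h0)
    obtain ⟨z, hwz, hg'eq⟩ := edge_decompF hg'F hwg'
    have hHwz : H.Adj w z := by
      rw [hHdef]
      exact SimpleGraph.deleteEdges_adj.mpr ⟨hwz, by rw [← hg'eq]; exact hg'D⟩
    rw [hgc0] at hwg
    apply hg'par
    rcases Sym2.mem_iff.mp hwg with h' | h'
    · rw [hg'eq, hmind_eval, h', hxr2 c0, SimpleGraph.dist_self]
      simp
    · have hcz : F.spanningCoe.connectedComponentMk z = c0 := by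
        rw [← hadj_comp w z hwz, h', hyr2]
      have hcw : F.spanningCoe.connectedComponentMk w = c0 := by rw [h', hyr2]
      have hdz : H.dist (xr c0) z = H.dist (xr c0) (yr c0) - 1 :=
        y_nbhd_dist hHle hdeg2 (hxr1 c0) (hNxH c0) (hintH c0) z (by rw [← h']; exact hHwz)
      have hmeq : mind g' = min (H.dist (xr c0) (yr c0)) (H.dist (xr c0) z) := by
        rw [hg'eq, hmind_eval, hcw, hcz, h']
      rw [hmeq, hdz]
      rw [Nat.even_iff] at heven ⊢
      omega
  -- ############ the coloring ############
  refine ⟨fun e => col e1 (s(u, v)) Del F.edgeSet mind ↑e, ?_⟩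
  intro e f hnef hcf
  have hvne : (↑e : Sym2 V) ≠ ↑f := fun h => hnef (Subtype.ext h)
  beta_reduce at hcf ⊢
  have hg0 : (([1,1,1,3] : List ℕ).get (0 : Fin 4)) = 1 := rfl
  have hg1 : (([1,1,1,3] : List ℕ).get (1 : Fin 4)) = 1 := rfl
  have hg2 : (([1,1,1,3] : List ℕ).get (2 : Fin 4)) = 1 := rfl
  have hg3 : (([1,1,1,3] : List ℕ).get (3 : Fin 4)) = 3 := rfl
  have hfin4 : ∀ i : Fin 4, i = 0 ∨ i = 1 ∨ i = 2 ∨ i = 3 := by decide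
  rcases hfin4 (col e1 (s(u, v)) Del F.edgeSet mind ↑e) with hcv | hcv | hcv | hcv
  · -- color 0
    have hcf0 : col e1 (s(u, v)) Del F.edgeSet mind ↑f = 0 := by rw [← hcf]; exact hcv
    obtain ⟨hne_e, hcase_e⟩ := col_zero hcv
    obtain ⟨hne_f, hcase_f⟩ := col_zero hcf0
    have hnadj : ¬ G.lineGraph.Adj e f := by
      intro hadj
      obtain ⟨-, w, hwe, hwf⟩ := lineGraph_adj_iff_exists.mp hadj
      rcases hcase_e with heD | ⟨heD, heF, hepar⟩ <;>
        rcases hcase_f with hfD | ⟨hfD, hfF, hfpar⟩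
      · obtain ⟨ce, hce0⟩ := heD
        obtain ⟨cf', hcf'0⟩ := hfD
        have hce : s(xr ce, yr ce) = (↑e : Sym2 V) := hce0
        have hcf' : s(xr cf', yr cf') = (↑f : Sym2 V) := hcf'0
        have h1 : ce = F.spanningCoe.connectedComponentMk w :=
          hDel_comp ce w (by rw [hce]; exact hwe)
        have h2 : cf' = F.spanningCoe.connectedComponentMk w :=
          hDel_comp cf' w (by rw [hcf']; exact hwf)
        exact hvne (by rw [← hce, ← hcf', h1, ← h2])
      · exact hDelH ↑e ↑f heD hne_e hfF hfD hfpar w hwe hwf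
      · exact hDelH ↑f ↑e hfD hne_f heF heD hepar w hwf hwe
      · exact hHH ↑e ↑f hvne heF heD hfF hfD (iff_of_false hepar hfpar) w hwe hwf
    rw [hcv, hg0]
    simpa using two_le_edist' hnef hnadj
  · -- color 1
    have hcf1 : col e1 (s(u, v)) Del F.edgeSet mind ↑f = 1 := by rw [← hcf]; exact hcv
    obtain ⟨heD, heF, hepar⟩ := col_one hcv
    obtain ⟨hfD, hfF, hfpar⟩ := col_one hcf1
    have hnadj : ¬ G.lineGraph.Adj e f := by
      intro hadj
      obtain ⟨-, w, hwe, hwf⟩ := lineGraph_adj_iff_exists.mp hadj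
      exact hHH ↑e ↑f hvne heF heD hfF hfD (iff_of_true hepar hfpar) w hwe hwf
    rw [hcv, hg1]
    simpa using two_le_edist' hnef hnadj
  · -- color 2
    have hcf2 : col e1 (s(u, v)) Del F.edgeSet mind ↑f = 2 := by rw [← hcf]; exact hcv
    obtain ⟨heF, -⟩ := col_two hcv
    obtain ⟨hfF, -⟩ := col_two hcf2
    have hnadj : ¬ G.lineGraph.Adj e f := by
      intro hadj
      obtain ⟨-, w, hwe, hwf⟩ := lineGraph_adj_iff_exists.mp hadj
      obtain ⟨a, hwa, heq⟩ := edge_decompG e.2 hwe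
      obtain ⟨b, hwb, hfq⟩ := edge_decompG f.2 hwf
      have hFa : ¬ F.Adj w a := fun h => heF (by rw [heq]; exact Subgraph.mem_edgeSet.mpr h)
      have hFb : ¬ F.Adj w b := fun h => hfF (by rw [hfq]; exact Subgraph.mem_edgeSet.mpr h)
      have h1 : a = m w := hm3 w a hwa hFa
      have h2 : b = m w := hm3 w b hwb hFb
      exact hvne (by rw [heq, hfq, h1, h2])
    rw [hcv, hg2]
    simpa using two_le_edist' hnef hnadj
  · -- color 3
    have hcf3 : col e1 (s(u, v)) Del F.edgeSet mind ↑f = 3 := by rw [← hcf]; exact hcv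
    rcases col_three hcv with he | he <;> rcases col_three hcf3 with hf' | hf'
    · exact absurd (he.trans hf'.symm) hvne
    · have hee : e = (⟨e1, he1G⟩ : G.edgeSet) := Subtype.ext he
      have hff : f = (⟨s(u, v), he2G⟩ : G.edgeSet) := Subtype.ext hf'
      rw [hcv, hg3, hee, hff, SimpleGraph.edist_comm]
      simpa using le_trans (by norm_num : ((3:ℕ∞) + 1) ≤ 4) hfar
    · have hee : e = (⟨s(u, v), he2G⟩ : G.edgeSet) := Subtype.ext he
      have hff : f = (⟨e1, he1G⟩ : G.edgeSet) := Subtype.ext hf'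
      rw [hcv, hg3, hee, hff]
      simpa using le_trans (by norm_num : ((3:ℕ∞) + 1) ≤ 4) hfar
    · exact absurd (he.trans hf'.symm) hvne

end PackingAux

/-- A cubic graph of oddness 2 with a 2-factor whose odd cycles are exactly `C1` and `C2`,
one of which has length at least 13, admits a (1,1,1,3)-packing edge-coloring. -/
theorem statement_1 {V : Type*} [Fintype V] (G : SimpleGraph V)
    (hconn : G.Connected) (hcubic : IsCubicGraph G)
    (F : G.Subgraph) (hF : IsTwoFactor F)
    (C1 C2 : F.spanningCoe.ConnectedComponent) (hne : C1 ≠ C2)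
    (hodd : oddCycles F = {C1, C2})
    (hoddness : ∀ F' : G.Subgraph, IsTwoFactor F' → 2 ≤ (oddCycles F').ncard)
    (hlen : 13 ≤ C1.supp.ncard ∨ 13 ≤ C2.supp.ncard) :
    HasPackingEdgeColoring G [1, 1, 1, 3] := by
  rcases hlen with h | h
  · exact PackingAux.main_one G hcubic F hF C1 C2 hne hodd h
  · exact PackingAux.main_one G hcubic F hF C2 C1 hne.symm
      (by rw [hodd]; exact Set.pair_comm C1 C2) h
end

section
/- Let G be a cubic graph having a 2-factor F, let k ≥ 2 and ℓ, ℓ', ℓ'' ≥ 1 be integers, and let A, B, C be a partition of E(F) such that A is of type I and B and C are of type II. If the chromatic numbers of G^k[A], G^k[B] and G^k[C] are at most ℓ, ℓ' and ℓ'' respectively, then G admits a (1,k^{ℓ+ℓ'+ℓ''})-packing edge-coloring (one color of radius 1 and ℓ+ℓ'+ℓ'' colors of radius k). -/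
open SimpleGraph

variable {V : Type*}

lemma aux_dist (G : SimpleGraph V) (k n : ℕ) (A : Set (Sym2 V))
    (c : (distPowerGraph G k A).Coloring (Fin n))
    (e f : G.edgeSet) (he : (e : Sym2 V) ∈ A) (hf : (f : Sym2 V) ∈ A)
    (hne : e ≠ f) (hc : c ⟨e, he⟩ = c ⟨f, hf⟩) :
    (k : ℕ∞) + 1 ≤ G.lineGraph.edist e f := by
  rw [ENat.add_one_le_iff (ENat.coe_ne_top k)]
  by_contra hle
  push_neg at hle
  have hne2 : (⟨(e : Sym2 V), he⟩ : A) ≠ ⟨(f : Sym2 V), hf⟩ := by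
    intro h
    exact hne (Subtype.ext (Subtype.mk_eq_mk.mp h))
  exact c.valid ⟨hne2, e.2, f.2, hle⟩ hc

lemma aux_match [Fintype V] (G : SimpleGraph V) (hcubic : IsCubicGraph G)
    (F : G.Subgraph) (hF : IsTwoFactor F) (e f : G.edgeSet)
    (he : (e : Sym2 V) ∉ F.edgeSet) (hf : (f : Sym2 V) ∉ F.edgeSet) (hne : e ≠ f) :
    (1 : ℕ∞) + 1 ≤ G.lineGraph.edist e f := by
  have hnadj : ¬ G.lineGraph.Adj e f := by
    rw [SimpleGraph.lineGraph_adj_iff_exists]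
    rintro ⟨-, v, hv1, hv2⟩
    obtain ⟨a, ha⟩ := Sym2.mem_iff_exists.mp hv1
    obtain ⟨b, hb⟩ := Sym2.mem_iff_exists.mp hv2
    have hGa : a ∈ G.neighborSet v := by
      have := e.2; rw [ha] at this; exact this
    have hGb : b ∈ G.neighborSet v := by
      have := f.2; rw [hb] at this; exact this
    have hab : a ≠ b := by
      intro h; exact hne (Subtype.ext (by rw [ha, hb, h]))
    have hFa : a ∉ F.neighborSet v := by
      intro hFa; exact he (by rw [ha]; exact SimpleGraph.Subgraph.mem_edgeSet.mpr hFa)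
    have hFb : b ∉ F.neighborSet v := by
      intro hFb; exact hf (by rw [hb]; exact SimpleGraph.Subgraph.mem_edgeSet.mpr hFb)
    have hsub : F.neighborSet v ∪ {a, b} ⊆ G.neighborSet v := by
      rintro x (hx | hx)
      · exact F.neighborSet_subset v hx
      · rcases hx with rfl | rfl
        · exact hGa
        · exact hGb
    have hfin : (G.neighborSet v).Finite := Set.toFinite _
    have h1 : (F.neighborSet v ∪ {a, b}).ncard ≤ 3 := by
      rw [← hcubic v]; exact Set.ncard_le_ncard hsub hfin
    have hdisj : Disjoint (F.neighborSet v) {a, b} := by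
      rw [Set.disjoint_right]
      rintro x (rfl | rfl) <;> assumption
    have h2 : (F.neighborSet v ∪ {a, b}).ncard = 4 := by
      rw [Set.ncard_union_eq hdisj (hfin.subset (F.neighborSet_subset v))
        (Set.toFinite _), (hF.2 v), Set.ncard_pair hab]
    omega
  have h0 : G.lineGraph.edist e f ≠ 0 :=
    fun h => hne (SimpleGraph.edist_eq_zero_iff.mp h)
  have h1 : G.lineGraph.edist e f ≠ 1 :=
    fun h => hnadj (SimpleGraph.edist_eq_one_iff_adj.mp h)
  have : (1 : ℕ∞) < G.lineGraph.edist e f :=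
    lt_of_le_of_ne (ENat.one_le_iff_ne_zero.mpr h0) (Ne.symm h1)
  rwa [ENat.add_one_le_iff (by simp)]

/-- If `E(F)` is partitioned into `A` of type I and `B`, `C` of type II, and `G^k[A]`,
`G^k[B]`, `G^k[C]` are respectively `ℓ`-, `ℓ'`- and `ℓ''`-colorable, then `G` admits a
(1,k^(ℓ+ℓ'+ℓ''))-packing edge-coloring. -/
theorem statement_10 {V : Type*} [Fintype V] (G : SimpleGraph V)
    (hconn : G.Connected) (hcubic : IsCubicGraph G)
    (F : G.Subgraph) (hF : IsTwoFactor F)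
    (k l l' l'' : ℕ) (hk : 2 ≤ k) (hl : 1 ≤ l) (hl' : 1 ≤ l') (hl'' : 1 ≤ l'')
    (A B C : Set (Sym2 V))
    (hpart : A ∪ B ∪ C = F.edgeSet)
    (hAB : Disjoint A B) (hAC : Disjoint A C) (hBC : Disjoint B C)
    (hA : IsTypeI F A) (hB : IsTypeII F B) (hC : IsTypeII F C)
    (hcolA : (distPowerGraph G k A).Colorable l)
    (hcolB : (distPowerGraph G k B).Colorable l')
    (hcolC : (distPowerGraph G k C).Colorable l'') :
    HasPackingEdgeColoring G ([1] ++ List.replicate (l + l' + l'') k) := by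
  classical
  obtain ⟨cA⟩ := hcolA
  obtain ⟨cB⟩ := hcolB
  obtain ⟨cC⟩ := hcolC
  set L : List ℕ := [1] ++ List.replicate (l + l' + l'') k with hLdef
  have hlen : L.length = 1 + (l + l' + l'') := by simp only [hLdef, List.length_append, List.length_replicate, List.length_cons, List.length_nil]
  set c : G.edgeSet → ℕ := fun e =>
    if h : (e : Sym2 V) ∈ A then 1 + (cA ⟨e, h⟩ : Fin l).val
    else if h : (e : Sym2 V) ∈ B then 1 + l + (cB ⟨e, h⟩ : Fin l').val
    else if h : (e : Sym2 V) ∈ C then 1 + l + l' + (cC ⟨e, h⟩ : Fin l'').val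
    else 0 with hcdef
  have hvalA : ∀ (e : G.edgeSet) (h : (e : Sym2 V) ∈ A),
      c e = 1 + (cA ⟨e, h⟩ : Fin l).val := by
    intro e h; simp only [hcdef]; rw [dif_pos h]
  have hvalB : ∀ (e : G.edgeSet), (e : Sym2 V) ∉ A → ∀ (h : (e : Sym2 V) ∈ B),
      c e = 1 + l + (cB ⟨e, h⟩ : Fin l').val := by
    intro e h1 h; simp only [hcdef]; rw [dif_neg h1, dif_pos h]
  have hvalC : ∀ (e : G.edgeSet), (e : Sym2 V) ∉ A → (e : Sym2 V) ∉ B →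
      ∀ (h : (e : Sym2 V) ∈ C), c e = 1 + l + l' + (cC ⟨e, h⟩ : Fin l'').val := by
    intro e h1 h2 h; simp only [hcdef]; rw [dif_neg h1, dif_neg h2, dif_pos h]
  have hval0 : ∀ (e : G.edgeSet), (e : Sym2 V) ∉ A → (e : Sym2 V) ∉ B →
      (e : Sym2 V) ∉ C → c e = 0 := by
    intro e h1 h2 h3; simp only [hcdef]; rw [dif_neg h1, dif_neg h2, dif_neg h3]
  have hbound : ∀ e, c e < L.length := by
    intro e
    rw [hlen]
    by_cases h1 : (e : Sym2 V) ∈ A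
    · rw [hvalA e h1]; have := (cA ⟨e, h1⟩).isLt; omega
    · by_cases h2 : (e : Sym2 V) ∈ B
      · rw [hvalB e h1 h2]; have := (cB ⟨e, h2⟩).isLt; omega
      · by_cases h3 : (e : Sym2 V) ∈ C
        · rw [hvalC e h1 h2 h3]; have := (cC ⟨e, h3⟩).isLt; omega
        · rw [hval0 e h1 h2 h3]; omega
  have hget : ∀ (j : ℕ) (hj : j < L.length),
      L.get ⟨j, hj⟩ = if j = 0 then 1 else k := by
    intro j hj
    match j with
    | 0 => rfl
    | j + 1 =>
      rw [if_neg (Nat.succ_ne_zero j)]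
      simp [hLdef]
  have hnotF : ∀ e : G.edgeSet, (e : Sym2 V) ∉ A → (e : Sym2 V) ∉ B →
      (e : Sym2 V) ∉ C → (e : Sym2 V) ∉ F.edgeSet := by
    intro e h1 h2 h3 hmem
    rw [← hpart] at hmem
    rcases hmem with (h | h) | h
    · exact h1 h
    · exact h2 h
    · exact h3 h
  refine ⟨fun e => ⟨c e, hbound e⟩, ?_⟩
  intro e f hne hcf
  have hvef : c e = c f := congrArg Fin.val hcf
  show ((L.get ⟨c e, hbound e⟩ : ℕ) : ℕ∞) + 1 ≤ G.lineGraph.edist e f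
  rw [hget (c e) (hbound e)]
  by_cases heA : (e : Sym2 V) ∈ A
  · rw [hvalA e heA] at hvef ⊢
    rw [if_neg (by omega)]
    have hea := (cA ⟨e, heA⟩).isLt
    by_cases hfA : (f : Sym2 V) ∈ A
    · rw [hvalA f hfA] at hvef
      exact aux_dist G k l A cA e f heA hfA hne (Fin.ext (by omega))
    · by_cases hfB : (f : Sym2 V) ∈ B
      · rw [hvalB f hfA hfB] at hvef; omega
      · by_cases hfC : (f : Sym2 V) ∈ C
        · rw [hvalC f hfA hfB hfC] at hvef; have := (cC ⟨f, hfC⟩).isLt; omega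
        · rw [hval0 f hfA hfB hfC] at hvef; omega
  · by_cases heB : (e : Sym2 V) ∈ B
    · rw [hvalB e heA heB] at hvef ⊢
      rw [if_neg (by omega)]
      have hea := (cB ⟨e, heB⟩).isLt
      by_cases hfA : (f : Sym2 V) ∈ A
      · rw [hvalA f hfA] at hvef; have := (cA ⟨f, hfA⟩).isLt; omega
      · by_cases hfB : (f : Sym2 V) ∈ B
        · rw [hvalB f hfA hfB] at hvef
          exact aux_dist G k l' B cB e f heB hfB hne (Fin.ext (by omega))
        · by_cases hfC : (f : Sym2 V) ∈ C
          · rw [hvalC f hfA hfB hfC] at hvef; have := (cC ⟨f, hfC⟩).isLt; omega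
          · rw [hval0 f hfA hfB hfC] at hvef; omega
    · by_cases heC : (e : Sym2 V) ∈ C
      · rw [hvalC e heA heB heC] at hvef ⊢
        rw [if_neg (by omega)]
        have hea := (cC ⟨e, heC⟩).isLt
        by_cases hfA : (f : Sym2 V) ∈ A
        · rw [hvalA f hfA] at hvef; have := (cA ⟨f, hfA⟩).isLt; omega
        · by_cases hfB : (f : Sym2 V) ∈ B
          · rw [hvalB f hfA hfB] at hvef; have := (cB ⟨f, hfB⟩).isLt; omega
          · by_cases hfC : (f : Sym2 V) ∈ C
            · rw [hvalC f hfA hfB hfC] at hvef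
              exact aux_dist G k l'' C cC e f heC hfC hne (Fin.ext (by omega))
            · rw [hval0 f hfA hfB hfC] at hvef; omega
      · rw [hval0 e heA heB heC] at hvef ⊢
        rw [if_pos rfl]
        by_cases hfA : (f : Sym2 V) ∈ A
        · rw [hvalA f hfA] at hvef; omega
        · by_cases hfB : (f : Sym2 V) ∈ B
          · rw [hvalB f hfA hfB] at hvef; omega
          · by_cases hfC : (f : Sym2 V) ∈ C
            · rw [hvalC f hfA hfB hfC] at hvef; omega
            · rw [Nat.cast_one]
              exact aux_match G hcubic F hF e f (hnotF e heA heB heC)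
                (hnotF f hfA hfB hfC) hne
end
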